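/- arXiv:2506.12924 — 6 statements merged into one kernel-verified Lean document; each statement's English description precedes it below -/
import Mathlib

section
/- For integers n, t, b, q with q ≥ 2 and n ≥ tb, any vector that is a sum of t b≤-bursts can be written as a sum of at most t pairwise disjoint b≤-bursts; that is, B*_{t,≤b} ⊆ ⋃_{i=0}^t B_{i,≤b}. -/
open scoped BigOperators

/-- The cyclic interval of length `L` starting at position `i` in `ZMod n`. -/
def cycInt (n : ℕ) (i : ZMod n) (L : ℕ) : Set (ZMod n) :=
  {j | ∃ k : ℕ, k < L ∧ j = i + (k : ZMod n)}

/-- `e` is a burst supported in the cyclic interval starting at `i` of length `L ≤ b`. -/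
def BurstAt {G : Type*} [AddCommGroup G] {n : ℕ} (b : ℕ) (e : ZMod n → G)
    (i : ZMod n) (L : ℕ) : Prop :=
  L ≤ b ∧ ∀ j : ZMod n, e j ≠ 0 → j ∈ cycInt n i L

/-- `e` is a `b≤`-burst: its support lies in a cyclic interval of length at most `b`. -/
def IsBurst {G : Type*} [AddCommGroup G] {n : ℕ} (b : ℕ) (e : ZMod n → G) : Prop :=
  ∃ i L, BurstAt b e i L

/-- `w` is a sum of exactly `t` many `b≤`-bursts. -/
def SumOfBursts {G : Type*} [AddCommGroup G] {n : ℕ} (b t : ℕ) (w : ZMod n → G) : Prop :=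
  ∃ l : List (ZMod n → G), l.length = t ∧ (∀ e ∈ l, IsBurst b e) ∧ l.sum = w

/-- The cyclic burst distance: minimum number of `b≤`-bursts summing to `x - y`. -/
noncomputable def burstDist {G : Type*} [AddCommGroup G] {n : ℕ} (b : ℕ)
    (x y : ZMod n → G) : ℕ :=
  sInf {t | SumOfBursts b t (x - y)}

/-- `w` is a sum of exactly `t` pairwise disjoint `b≤`-bursts (disjoint covering intervals). -/
def SumOfDisjointBursts {G : Type*} [AddCommGroup G] {n : ℕ} (b t : ℕ)
    (w : ZMod n → G) : Prop :=
  ∃ (es : Fin t → ZMod n → G) (ps : Fin t → ZMod n) (Ls : Fin t → ℕ),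
    (∀ m, BurstAt b (es m) (ps m) (Ls m)) ∧
    (∀ m m' : Fin t, m ≠ m' → cycInt n (ps m) (Ls m) ∩ cycInt n (ps m') (Ls m') = ∅) ∧
    ∑ m, es m = w

/-- `B_{≤t,≤b}`: vectors expressible as a sum of at most `t` pairwise disjoint `b≤`-bursts. -/
def BSet (n b t : ℕ) (G : Type*) [AddCommGroup G] : Set (ZMod n → G) :=
  {w | ∃ i ≤ t, SumOfDisjointBursts b i w}

/-- The radius-`t` burst ball around `x`. -/
def burstBall {G : Type*} [AddCommGroup G] {n : ℕ} (b t : ℕ) (x : ZMod n → G) :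
    Set (ZMod n → G) :=
  {y | burstDist b x y ≤ t}

/-- A `(t,b)`-burst-correcting code: radius-`t` burst balls around distinct codewords
are disjoint. -/
def IsBurstCorrecting {G : Type*} [AddCommGroup G] {n : ℕ} (t b : ℕ)
    (C : Set (ZMod n → G)) : Prop :=
  ∀ u ∈ C, ∀ v ∈ C, u ≠ v → burstBall b t u ∩ burstBall b t v = ∅


/-!
Cover the support of `w` greedily from left to right by intervals of length `b`, each starting at
the leftmost nonzero position not yet covered: the intervals are pairwise disjoint and their
starts are at least `b` apart. To count them, cut the circle at a point `p`. If `p` lies outside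
all `t` given bursts, these become intervals of the line, each start lies in one of them, and no
interval of length at most `b` contains two starts. Otherwise the `t` bursts cover the circle, so
`n ≤ t * b`, and `n` positions hold at most `t` starts that are `b` apart.
-/

open Finset Function

section CyclicIntervals

variable {n : ℕ}

theorem disjoint_cycInt_add_natCast (p : ZMod n) {a a' L L' : ℕ} (h : a + L ≤ a')
    (h' : a' + L' ≤ n) : Disjoint (cycInt n (p + a) L) (cycInt n (p + a') L') := by
  rw [Set.disjoint_left]
  rintro _ ⟨r, hr, rfl⟩ ⟨r', hr', h_eq⟩
  have hcast : ((a + r : ℕ) : ZMod n) = ((a' + r' : ℕ) : ZMod n) := by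
    push_cast
    linear_combination h_eq
  rw [ZMod.natCast_eq_natCast_iff', Nat.mod_eq_of_lt (by omega), Nat.mod_eq_of_lt (by omega)]
    at hcast
  omega

theorem mem_Ico_of_add_mem_cycInt [NeZero n] {p i : ZMod n} {a L : ℕ} (hp : p ∉ cycInt n i L)
    (ha : a < n) (h : p + a ∈ cycInt n i L) :
    a ∈ Set.Ico (i - p).val ((i - p).val + L) := by
  obtain ⟨m, hm, hpa⟩ := h
  set s := (i - p).val
  have hs : (s : ZMod n) = i - p := ZMod.natCast_zmod_val _
  have hsm : s + m < n := by
    by_contra! hle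
    refine hp ⟨n - s, by omega, ?_⟩
    rw [Nat.cast_sub (ZMod.val_lt _).le, ZMod.natCast_self, hs]
    ring
  have hcast : (a : ZMod n) = ((s + m : ℕ) : ZMod n) := by
    push_cast
    linear_combination hpa - hs
  rw [ZMod.natCast_eq_natCast_iff', Nat.mod_eq_of_lt ha, Nat.mod_eq_of_lt hsm] at hcast
  simp only [Set.mem_Ico]
  omega

theorem le_sum_of_forall_exists_mem_cycInt [NeZero n] {ι : Type*} [Fintype ι]
    (ps : ι → ZMod n) (Ls : ι → ℕ) (h : ∀ j, ∃ k, j ∈ cycInt n (ps k) (Ls k)) :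
    n ≤ ∑ k, Ls k := by
  classical
  calc n = #(univ : Finset (ZMod n)) := (ZMod.card n).symm
    _ ≤ #(univ.biUnion fun k => (range (Ls k)).image fun m : ℕ => ps k + m) := by
      refine card_le_card fun j _ => ?_
      obtain ⟨k, m, hm, rfl⟩ := h j
      simpa using ⟨k, m, hm, rfl⟩
    _ ≤ ∑ k, #((range (Ls k)).image fun m : ℕ => ps k + m) := card_biUnion_le
    _ ≤ ∑ k, Ls k := sum_le_sum fun k _ => card_image_le.trans (card_range _).le

end CyclicIntervals

section Separated

theorem exists_separated_subset_covering {b : ℕ} (hb : 0 < b) (S : Finset ℕ) :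
    ∃ A ⊆ S, (∀ a ∈ A, ∀ a' ∈ A, a < a' → a + b ≤ a') ∧
      ∀ s ∈ S, ∃ a ∈ A, a ≤ s ∧ s < a + b := by
  induction S using Finset.induction_on_max with
  | empty => exact ⟨∅, subset_rfl, by simp, by simp⟩
  | insert x S hxS ih =>
    obtain ⟨A, hAS, hsep, hcov⟩ := ih
    by_cases hx : ∃ a ∈ A, a ≤ x ∧ x < a + b
    · refine ⟨A, hAS.trans (subset_insert _ _), hsep, ?_⟩
      simpa only [mem_insert, forall_eq_or_imp] using ⟨hx, hcov⟩
    · push Not at hx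
      have hfar : ∀ a ∈ A, a + b ≤ x := fun a ha => hx a ha (hxS a (hAS ha)).le
      refine ⟨insert x A, insert_subset_insert _ hAS, ?_, ?_⟩
      · simp only [mem_insert, forall_eq_or_imp]
        refine ⟨⟨by omega, fun a ha h => absurd (hxS a (hAS ha)) (by omega)⟩,
          fun a ha => ⟨fun _ => hfar a ha, hsep a ha⟩⟩
      · simp only [mem_insert, forall_eq_or_imp, exists_eq_or_imp]
        exact ⟨Or.inl ⟨le_rfl, by omega⟩, fun s hs => Or.inr (hcov s hs)⟩

variable {A : Finset ℕ} {b : ℕ}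

theorem card_le_of_separated_of_forall_lt {n t : ℕ} (hb : 0 < b)
    (hsep : ∀ a ∈ A, ∀ a' ∈ A, a < a' → a + b ≤ a') (hA : ∀ a ∈ A, a < n)
    (hn : n ≤ t * b) : #A ≤ t := by
  have hinj : Set.InjOn (· / b) A := by
    have key : ∀ a ∈ A, ∀ a' ∈ A, a < a' → a / b < a' / b := fun a ha a' ha' h => by
      have := Nat.div_le_div_right (c := b) (hsep a ha a' ha' h)
      rw [Nat.add_div_right _ hb] at this
      omega
    intro a ha a' ha' h
    rcases lt_trichotomy a a' with hlt | heq | hgt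
    · exact absurd h (key a ha a' ha' hlt).ne
    · exact heq
    · exact absurd h (key a' ha' a ha hgt).ne'
  calc #A ≤ #(range t) := card_le_card_of_injOn (· / b) (fun a ha => by
        simpa using Nat.div_lt_of_lt_mul ((hA a ha).trans_le (hn.trans_eq (mul_comm _ _))))
        hinj
    _ = t := card_range t

theorem card_le_of_separated_of_forall_mem_Ico {ι : Type*} [Fintype ι] (s L : ι → ℕ)
    (hL : ∀ k, L k ≤ b) (hsep : ∀ a ∈ A, ∀ a' ∈ A, a < a' → a + b ≤ a')
    (hA : ∀ a ∈ A, ∃ k, a ∈ Set.Ico (s k) (s k + L k)) : #A ≤ Fintype.card ι := by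
  refine (card_le_card_of_forall_subsingleton (fun a k => a ∈ Set.Ico (s k) (s k + L k))
    (t := univ) (by simpa using hA) fun k _ a ha a' ha' => ?_).trans_eq card_univ
  simp only [Set.mem_ofPred_eq, Set.mem_Ico] at ha ha'
  have := hL k
  rcases lt_trichotomy a a' with hlt | heq | hgt
  · have := hsep a ha.1 a' ha'.1 hlt; omega
  · exact heq
  · have := hsep a' ha'.1 a ha.1 hgt; omega

end Separated

section Bursts

variable {G : Type*} [AddCommGroup G] {n : ℕ}

theorem SumOfBursts.exists_cover {b t : ℕ} {w : ZMod n → G} (hw : SumOfBursts b t w) :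
    ∃ (ps : Fin t → ZMod n) (Ls : Fin t → ℕ), (∀ k, Ls k ≤ b) ∧
      ∀ j, w j ≠ 0 → ∃ k, j ∈ cycInt n (ps k) (Ls k) := by
  obtain ⟨l, rfl, hl, rfl⟩ := hw
  induction l with
  | nil => exact ⟨finZeroElim, finZeroElim, finZeroElim, fun j hj => by simp at hj⟩
  | cons e l ih =>
    obtain ⟨ps, Ls, hL, hcov⟩ := ih fun e' he' => hl e' (List.mem_cons_of_mem e he')
    obtain ⟨p, L, hLb, he⟩ := hl e List.mem_cons_self
    refine ⟨Fin.cons p ps, Fin.cons L Ls, Fin.cases hLb hL, fun j hj => ?_⟩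
    by_cases hej : e j = 0
    · obtain ⟨k, hk⟩ := hcov j (by simpa [hej] using hj)
      exact ⟨k.succ, by simpa using hk⟩
    · exact ⟨0, by simpa using he j hej⟩

theorem sumOfDisjointBursts_of_cover {ι : Type*} [Fintype ι] {b : ℕ} {w : ZMod n → G}
    (ps : ι → ZMod n) (Ls : ι → ℕ) (hL : ∀ k, Ls k ≤ b)
    (hdisj : Pairwise (Disjoint on fun k => cycInt n (ps k) (Ls k)))
    (hcov : ∀ j, w j ≠ 0 → ∃ k, j ∈ cycInt n (ps k) (Ls k)) :
    SumOfDisjointBursts b (Fintype.card ι) w := by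
  set I := fun k => cycInt n (ps k) (Ls k)
  let e := (Fintype.equivFin ι).symm
  refine ⟨fun m => (I (e m)).indicator w, ps ∘ e, Ls ∘ e,
    fun m => ⟨hL _, fun j hj => Set.mem_of_indicator_ne_zero hj⟩,
    fun m m' hm => Set.disjoint_iff_inter_eq_empty.1 (hdisj (e.injective.ne hm)), ?_⟩
  have hw : (⋃ k ∈ (univ : Finset ι), I k).indicator w = w :=
    Set.indicator_eq_self.2 fun j hj => by simpa using hcov j hj
  ext j
  rw [Finset.sum_apply, e.sum_comp (fun k => (I k).indicator w j),
    ← Finset.indicator_biUnion_apply _ _ (hdisj.set_pairwise _), hw]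

theorem exists_separated_sumOfDisjointBursts [NeZero n] {b : ℕ} (hb : 0 < b) (p : ZMod n)
    (w : ZMod n → G) :
    ∃ A : Finset ℕ, (∀ a ∈ A, a < n ∧ w (p + a) ≠ 0) ∧
      (∀ a ∈ A, ∀ a' ∈ A, a < a' → a + b ≤ a') ∧ SumOfDisjointBursts b #A w := by
  classical
  obtain ⟨A, hAS, hsep, hcov⟩ :=
    exists_separated_subset_covering hb ((range n).filter fun x => w (p + x) ≠ 0)
  have hA : ∀ a ∈ A, a < n ∧ w (p + a) ≠ 0 := fun a ha => by simpa using hAS ha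
  refine ⟨A, hA, hsep, ?_⟩
  set I := fun a : A => cycInt n (p + ((a : ℕ) : ZMod n)) (min b (n - a))
  have hdisj : Pairwise (Disjoint on I) := by
    -- truncating at `n` keeps the last interval from wrapping around onto the first
    have key : ∀ a a' : A, (a : ℕ) < a' → Disjoint (I a) (I a') := fun a a' h => by
      have := hsep a a.2 a' a'.2 h
      have := (hA a' a'.2).1
      exact disjoint_cycInt_add_natCast p (by omega) (by omega)
    intro a a' hne
    rcases lt_or_gt_of_ne (Subtype.coe_ne_coe.2 hne) with h | h
    exacts [key a a' h, (key a' a h).symm]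
  have hcover : ∀ j, w j ≠ 0 → ∃ a, j ∈ I a := by
    intro j hj
    set x := (j - p).val
    have hx : x < n := ZMod.val_lt _
    have hj_eq : j = p + x := by simp [x]
    obtain ⟨a, ha, hax, hxa⟩ := hcov x (by simpa [← hj_eq] using ⟨hx, hj⟩)
    refine ⟨⟨a, ha⟩, x - a, show x - a < min b (n - a) by omega, ?_⟩
    rw [hj_eq, add_assoc, ← Nat.cast_add, Nat.add_sub_cancel' hax]
  simpa using sumOfDisjointBursts_of_cover _ _ (fun _ => min_le_left _ _) hdisj hcover

end Bursts

theorem sum_of_bursts_disjoint_decomposition_general {G : Type*} [AddCommGroup G]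
    (n t b : ℕ) (hn : t * b ≤ n)
    (w : ZMod n → G) (hw : SumOfBursts b t w) :
    ∃ i ≤ t, SumOfDisjointBursts b i w := by
  obtain ⟨ps, Ls, hL, hcov⟩ := hw.exists_cover
  by_cases hw0 : w = 0
  · exact ⟨0, t.zero_le, finZeroElim, finZeroElim, finZeroElim, finZeroElim, finZeroElim,
      by simp [hw0]⟩
  obtain ⟨j, hj⟩ := Function.ne_iff.1 hw0
  obtain ⟨k, m, hm, -⟩ := hcov j hj
  have hb : 0 < b := (m.zero_le.trans_lt hm).trans_le (hL k)
  have : NeZero n := ⟨((Nat.mul_pos k.pos hb).trans_le hn).ne'⟩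
  by_cases hp : ∃ p, ∀ k, p ∉ cycInt n (ps k) (Ls k)
  · obtain ⟨p, hp⟩ := hp
    obtain ⟨A, hA, hsep, hdec⟩ := exists_separated_sumOfDisjointBursts hb p w
    refine ⟨#A, ?_, hdec⟩
    simpa using card_le_of_separated_of_forall_mem_Ico (fun k => (ps k - p).val) Ls hL hsep
      fun a ha => (hcov _ (hA a ha).2).imp fun k hk =>
        mem_Ico_of_add_mem_cycInt (hp k) (hA a ha).1 hk
  · push Not at hp
    obtain ⟨A, hA, hsep, hdec⟩ := exists_separated_sumOfDisjointBursts hb 0 w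
    have hnt : n ≤ t * b := (le_sum_of_forall_exists_mem_cycInt ps Ls hp).trans
      (by simpa using sum_le_card_nsmul univ Ls b fun k _ => hL k)
    exact ⟨#A, card_le_of_separated_of_forall_lt hb hsep (fun a ha => (hA a ha).1) hnt, hdec⟩

/-- any sum of t bursts is a sum of at most t pairwise disjoint bursts,
i.e. B*_{t,≤b} ⊆ ⋃_{i=0}^t B_{i,≤b}, provided n ≥ tb. -/
theorem sum_of_bursts_disjoint_decomposition {G : Type*} [AddCommGroup G] [Fintype G]
    (q n t b : ℕ) (hq : Fintype.card G = q) (hq2 : 2 ≤ q) (hn : t * b ≤ n)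
    (w : ZMod n → G) (hw : SumOfBursts b t w) :
    ∃ i ≤ t, SumOfDisjointBursts b i w :=
  sum_of_bursts_disjoint_decomposition_general n t b hn w hw
end

section
/- For fixed q, t, b and all n ≥ 2bt, the number of vectors in Σ_q^n expressible as at most t disjoint b≤-bursts satisfies (1−1/q)^t (q^b−1)^t C(n−(2b−2)t, t) ≤ |B_{≤t,≤b}| ≤ (t+1)(q^b−1)^t C(n, t). -/
open scoped BigOperators

/-!
Upper bound: a sum of at most `t` bursts is recovered from the map sending each position `p` to the
length-`b` window of the bursts starting at `p`. This map `ZMod n → (Fin b → G)` has at most `t`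
nonzero values, so there are at most `∑_{i ≤ t} C(n,i) (q^b-1)^i ≤ (t+1) C(n,t) (q^b-1)^t` such
maps, as `C(n,i) ≤ C(n,t)` for `i ≤ t ≤ n/2`.

Lower bound: a `t`-subset `s_0 < ⋯ < s_{t-1}` of `{0, …, n-(2b-2)t-1}` gives the start positions
`s_m + (2b-2)m`, so that every burst placed there is followed by at least `b-1` zeros, also
cyclically after the last one. With nonzero first symbols, the starts of the bursts are then exactly
the nonzero positions preceded by `b-1` zeros, so the `C(n-(2b-2)t, t) (q^b-q^(b-1))^t` words built
this way are distinct. Finally `(1-1/q)(q^b-1) ≤ q^b-q^(b-1)`.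
-/

open Finset

section Burst

variable {G : Type*} [AddCommGroup G] {n b : ℕ}

lemma ZMod.natCast_inj_of_lt {x y : ℕ} (hx : x < n) (hy : y < n) (h : (x : ZMod n) = y) :
    x = y := by
  rwa [ZMod.natCast_eq_natCast_iff', Nat.mod_eq_of_lt hx, Nat.mod_eq_of_lt hy] at h

def burst (p : ZMod n) (v : Fin b → G) : ZMod n → G :=
  ∑ k : Fin b, Pi.single (p + (k : ℕ)) (v k)

lemma burst_apply (p : ZMod n) (v : Fin b → G) (j : ZMod n) :
    burst p v j = ∑ k : Fin b, if j = p + (k : ℕ) then v k else 0 := by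
  simp [burst, Finset.sum_apply, Pi.single_apply]

lemma burst_sum {ι : Type*} (s : Finset ι) (p : ZMod n) (v : ι → Fin b → G) :
    burst p (∑ m ∈ s, v m) = ∑ m ∈ s, burst p (v m) := by
  funext j
  simp only [burst_apply, Finset.sum_apply]
  rw [sum_comm]
  refine sum_congr rfl fun k _ => ?_
  split_ifs <;> simp

lemma burst_apply_add (hbn : b ≤ n) (p : ZMod n) (v : Fin b → G) (k : Fin b) :
    burst p v (p + (k : ℕ)) = v k := by
  rw [burst_apply, sum_eq_single k (fun k' _ hk' => if_neg fun h => hk' ?_) (by simp), if_pos rfl]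
  exact Fin.ext (ZMod.natCast_inj_of_lt (k'.2.trans_le hbn) (k.2.trans_le hbn)
    (add_left_cancel h).symm)

lemma mem_cycInt_of_burst_apply_ne_zero {p : ZMod n} {v : Fin b → G} {j : ZMod n}
    (h : burst p v j ≠ 0) : j ∈ cycInt n p b := by
  rw [burst_apply] at h
  obtain ⟨k, -, hk⟩ := exists_ne_zero_of_sum_ne_zero h
  exact ⟨k, k.2, by_contra fun hj => hk (if_neg hj)⟩

lemma burstAt_burst (p : ZMod n) (v : Fin b → G) : BurstAt b (burst p v) p b :=
  ⟨le_rfl, fun _ => mem_cycInt_of_burst_apply_ne_zero⟩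

lemma BurstAt.eq_burst {e : ZMod n → G} {p : ZMod n} {L : ℕ} (he : BurstAt b e p L)
    (hbn : b ≤ n) : e = burst p fun k : Fin b => e (p + (k : ℕ)) := by
  funext j
  by_cases hj : ∃ k : Fin b, j = p + (k : ℕ)
  · obtain ⟨k, rfl⟩ := hj
    rw [burst_apply_add hbn]
  · push Not at hj
    rw [burst_apply, sum_eq_zero fun k _ => if_neg (hj k)]
    by_contra h0
    obtain ⟨k, hk, rfl⟩ := he.2 j h0
    exact hj ⟨k, hk.trans_le he.1⟩ rfl

end Burst

lemma Nat.choose_le_choose_of_le_half {N i j : ℕ} (hij : i ≤ j) (hj : 2 * j ≤ N) :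
    N.choose i ≤ N.choose j := by
  induction j, hij using Nat.le_induction with
  | base => rfl
  | succ j _ ih => exact (ih (by omega)).trans (Nat.choose_le_succ_of_lt_half_left (by omega))

lemma card_finset_card_le_le {α : Type*} [Fintype α] {t : ℕ} (ht : 2 * t ≤ Fintype.card α) :
    #{s : Finset α | #s ≤ t} ≤ (t + 1) * (Fintype.card α).choose t := by
  rw [mul_comm, ← card_range (t + 1)]
  refine card_le_mul_card_image_of_maps_to (f := card)
    (fun s hs => mem_range.2 (Nat.lt_succ_of_le (mem_filter.1 hs).2)) _ fun i hi => ?_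
  calc #{s ∈ {s : Finset α | #s ≤ t} | #s = i}
      ≤ #(powersetCard i (univ : Finset α)) :=
        card_le_card fun s hs => mem_powersetCard_univ.2 (mem_filter.1 hs).2
    _ ≤ (Fintype.card α).choose t := by
        rw [card_powersetCard, card_univ]
        exact Nat.choose_le_choose_of_le_half (Nat.lt_succ_iff.1 (mem_range.1 hi)) ht

section HammingBall

variable {α β : Type*} [Fintype α] [DecidableEq α] [Fintype β] [Zero β] [DecidableEq β]

lemma card_filter_support_eq (s : Finset α) :
    #{F : α → β | ({x | F x ≠ 0} : Finset α) = s} = (Fintype.card β - 1) ^ #s := by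
  have hfib : ({F : α → β | ({x | F x ≠ 0} : Finset α) = s} : Finset (α → β))
      = Fintype.piFinset fun x => if x ∈ s then {0}ᶜ else {0} := by
    ext F
    simp only [mem_filter, mem_univ, true_and, Fintype.mem_piFinset, Finset.ext_iff]
    refine forall_congr' fun x => ?_
    split_ifs <;> simp [*]
  rw [hfib, Fintype.card_piFinset]
  simp only [apply_ite card, card_compl, card_singleton, Fintype.prod_ite_mem, prod_const]

lemma card_hammingNorm_le_le {t : ℕ} (ht : 2 * t ≤ Fintype.card α) (hβ : 2 ≤ Fintype.card β) :
    #{F : α → β | hammingNorm F ≤ t}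
      ≤ (t + 1) * (Fintype.card α).choose t * (Fintype.card β - 1) ^ t := by
  refine (card_le_mul_card_image_of_maps_to (f := fun F : α → β => ({x | F x ≠ 0} : Finset α))
    (t := {s : Finset α | #s ≤ t}) (fun F hF => mem_filter.2 ⟨mem_univ _, (mem_filter.1 hF).2⟩)
    ((Fintype.card β - 1) ^ t) fun s hs => ?_).trans ?_
  · calc _ ≤ #{F : α → β | ({x | F x ≠ 0} : Finset α) = s} :=
          card_le_card (filter_subset_filter _ (filter_subset _ _))
      _ ≤ _ := by
        rw [card_filter_support_eq]
        exact Nat.pow_le_pow_right (by omega) (mem_filter.1 hs).2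
  · rw [mul_comm]
    exact Nat.mul_le_mul_right _ (card_finset_card_le_le ht)

end HammingBall

section Upper

variable {G : Type*} [AddCommGroup G] {n b t : ℕ} [NeZero n]

def burstSum (F : ZMod n → Fin b → G) : ZMod n → G :=
  ∑ p, burst p (F p)

open scoped Classical in
lemma SumOfDisjointBursts.exists_burstSum_eq (hbn : b ≤ n) {w : ZMod n → G}
    (hw : SumOfDisjointBursts b t w) :
    ∃ F : ZMod n → Fin b → G, hammingNorm F ≤ t ∧ burstSum F = w := by
  obtain ⟨es, ps, Ls, hes, -, rfl⟩ := hw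
  let slice (m : Fin t) : Fin b → G := fun k => es m (ps m + (k : ℕ))
  refine ⟨fun p => ∑ m with ps m = p, slice m, ?_, ?_⟩
  · refine (card_le_card (t := univ.image ps) fun p hp => ?_).trans
      (card_image_le.trans_eq (card_fin t))
    obtain ⟨m, hm, -⟩ := exists_ne_zero_of_sum_ne_zero (mem_filter.1 hp).2
    exact mem_image.2 ⟨m, mem_univ m, (mem_filter.1 hm).2⟩
  · calc ∑ p, burst p (∑ m with ps m = p, slice m)
        = ∑ p, ∑ m with ps m = p, burst (ps m) (slice m) := by
          refine sum_congr rfl fun p _ => ?_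
          rw [burst_sum]
          exact sum_congr rfl fun m hm => by rw [(mem_filter.1 hm).2]
      _ = ∑ m, es m := by
          rw [sum_fiberwise]
          exact sum_congr rfl fun m _ => ((hes m).eq_burst hbn).symm

lemma ncard_bset_le [Fintype G] (hbn : b ≤ n) (ht : 2 * t ≤ n) (hb : b ≠ 0)
    (hG : 2 ≤ Fintype.card G) :
    (BSet n b t G).ncard ≤ (t + 1) * n.choose t * (Fintype.card G ^ b - 1) ^ t := by
  classical
  have hsub : BSet n b t G ⊆ burstSum '' {F : ZMod n → Fin b → G | hammingNorm F ≤ t} := by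
    rintro w ⟨i, hi, hw⟩
    obtain ⟨F, hF, rfl⟩ := hw.exists_burstSum_eq hbn
    exact ⟨F, hF.trans hi, rfl⟩
  have hcard : 2 ≤ Fintype.card (Fin b → G) := by
    rw [Fintype.card_fun, Fintype.card_fin]
    exact Nat.one_lt_pow hb hG
  calc (BSet n b t G).ncard
      ≤ (burstSum '' {F : ZMod n → Fin b → G | hammingNorm F ≤ t}).ncard :=
        Set.ncard_le_ncard hsub
    _ ≤ #{F : ZMod n → Fin b → G | hammingNorm F ≤ t} := by
        rw [← Set.ncard_coe_finset, coe_filter_univ]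
        exact Set.ncard_image_le
    _ ≤ _ := by
        simpa [ZMod.card] using card_hammingNorm_le_le (ht.trans_eq (ZMod.card n).symm) hcard

end Upper

section Lower

variable {G : Type*} [AddCommGroup G] {n b t : ℕ}

structure IsWellSpaced (n b : ℕ) (P : Fin t → ℕ) : Prop where
  add_le_of_lt : ∀ ⦃m m'⦄, m < m' → P m + (2 * b - 1) ≤ P m'
  add_le : ∀ m, P m + (2 * b - 1) ≤ n

def spacedWord (n : ℕ) (P : Fin t → ℕ) (c : Fin t → Fin b → G) : ZMod n → G :=
  ∑ m, burst (P m : ZMod n) (c m)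

def burstStarts (b : ℕ) (w : ZMod n → G) : Set (ZMod n) :=
  {j | w j ≠ 0 ∧ ∀ d : ℕ, 0 < d → d < b → w (j - d) = 0}

namespace IsWellSpaced

variable {P : Fin t → ℕ}

lemma strictMono [NeZero b] (hP : IsWellSpaced n b P) : StrictMono P := fun m m' h => by
  have := hP.add_le_of_lt h
  have := NeZero.ne b
  omega

lemma image_val_range [NeZero b] (hP : IsWellSpaced n b P) :
    ZMod.val '' Set.range (fun m => (P m : ZMod n)) = Set.range P := by
  rw [← Set.range_comp]
  refine congrArg Set.range (funext fun m => ?_)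
  have := hP.add_le m
  have := NeZero.ne b
  exact ZMod.val_natCast_of_lt (by omega)

lemma eq_of_natCast_add_eq (hP : IsWellSpaced n b P) {m m' : Fin t} {k k' : ℕ}
    (hk : k < 2 * b - 1) (hk' : k' < 2 * b - 1)
    (h : ((P m + k : ℕ) : ZMod n) = (P m' + k' : ℕ)) : m = m' ∧ k = k' := by
  have := hP.add_le m
  have := hP.add_le m'
  have heq := ZMod.natCast_inj_of_lt (by omega) (by omega) h
  rcases lt_trichotomy m m' with hm | rfl | hm
  · have := hP.add_le_of_lt hm
    omega
  · omega
  · have := hP.add_le_of_lt hm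
    omega

lemma cycInt_inter_eq_empty (hP : IsWellSpaced n b P) {m m' : Fin t} (hmm : m ≠ m') :
    cycInt n (P m) b ∩ cycInt n (P m') b = ∅ := by
  refine Set.eq_empty_of_forall_notMem fun j ⟨⟨k, hk, hj⟩, ⟨k', hk', hj'⟩⟩ => hmm ?_
  refine (hP.eq_of_natCast_add_eq (k := k) (k' := k') (by omega) (by omega) ?_).1
  push_cast
  exact hj.symm.trans hj'

lemma spacedWord_mem_bset (hP : IsWellSpaced n b P) (c : Fin t → Fin b → G) :
    spacedWord n P c ∈ BSet n b t G :=
  ⟨t, le_rfl, fun m => burst (P m : ZMod n) (c m), fun m => P m, fun _ => b,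
    fun _ => burstAt_burst _ _, fun _ _ => hP.cycInt_inter_eq_empty, rfl⟩

lemma spacedWord_apply_add (hP : IsWellSpaced n b P) (c : Fin t → Fin b → G) (m : Fin t)
    (k : Fin b) : spacedWord n P c (P m + (k : ℕ)) = c m k := by
  have := hP.add_le m
  rw [spacedWord, Finset.sum_apply, sum_eq_single m _ (by simp), burst_apply_add (by omega)]
  intro m' _ hm'
  by_contra h0
  obtain ⟨k', hk', hj⟩ := mem_cycInt_of_burst_apply_ne_zero h0
  refine hm' (hP.eq_of_natCast_add_eq (k := k') (k' := k) (by omega) (by omega) ?_).1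
  push_cast
  exact hj.symm

lemma spacedWord_apply_sub (hP : IsWellSpaced n b P) (c : Fin t → Fin b → G) (m : Fin t)
    {d : ℕ} (hd : 0 < d) (hdb : d < b) : spacedWord n P c (P m - d) = 0 := by
  rw [spacedWord, Finset.sum_apply]
  refine sum_eq_zero fun m' _ => ?_
  by_contra h0
  obtain ⟨k', hk', hj⟩ := mem_cycInt_of_burst_apply_ne_zero h0
  have := (hP.eq_of_natCast_add_eq (m := m) (m' := m') (k := 0) (k' := k' + d)
    (by omega) (by omega) ?_).2
  · omega
  · push_cast
    linear_combination hj

lemma burstStarts_spacedWord [NeZero b] (hP : IsWellSpaced n b P) {c : Fin t → Fin b → G}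
    (hc : ∀ m, c m 0 ≠ 0) :
    burstStarts b (spacedWord n P c) = Set.range fun m => (P m : ZMod n) := by
  have happly_zero (m : Fin t) : spacedWord n P c (P m) = c m 0 := by
    simpa using hP.spacedWord_apply_add c m 0
  ext j
  constructor
  · rintro ⟨hj, hbefore⟩
    obtain ⟨m, -, hm⟩ :=
      exists_ne_zero_of_sum_ne_zero (by rwa [spacedWord, Finset.sum_apply] at hj)
    obtain ⟨k, hk, rfl⟩ := mem_cycInt_of_burst_apply_ne_zero hm
    rcases Nat.eq_zero_or_pos k with rfl | hk0
    · exact ⟨m, by simp⟩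
    · exact absurd (by simpa [happly_zero] using hbefore k hk0 hk) (hc m)
  · rintro ⟨m, rfl⟩
    exact ⟨(happly_zero m).symm ▸ hc m, fun d hd hdb => hP.spacedWord_apply_sub c m hd hdb⟩

lemma spacedWord_inj [NeZero b] {P' : Fin t → ℕ} {c c' : Fin t → Fin b → G}
    (hP : IsWellSpaced n b P) (hP' : IsWellSpaced n b P') (hc : ∀ m, c m 0 ≠ 0)
    (hc' : ∀ m, c' m 0 ≠ 0) (h : spacedWord n P c = spacedWord n P' c') : P = P' ∧ c = c' := by
  obtain rfl : P = P' := by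
    refine (hP.strictMono.range_inj hP'.strictMono).1 ?_
    rw [← hP.image_val_range, ← hP'.image_val_range, ← hP.burstStarts_spacedWord hc,
      ← hP'.burstStarts_spacedWord hc', h]
  refine ⟨rfl, funext fun m => funext fun k => ?_⟩
  rw [← hP.spacedWord_apply_add c m k, h, hP'.spacedWord_apply_add]

end IsWellSpaced

def spreadPositions (b : ℕ) {N t : ℕ} (s : {s : Finset (Fin N) // #s = t}) : Fin t → ℕ :=
  fun m => s.1.orderEmbOfFin s.2 m + (2 * b - 2) * m

lemma isWellSpaced_spreadPositions {N : ℕ} (hN : N + (2 * b - 2) * t ≤ n)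
    (s : {s : Finset (Fin N) // #s = t}) : IsWellSpaced n b (spreadPositions b s) where
  add_le_of_lt m m' h := by
    have h₁ : s.1.orderEmbOfFin s.2 m < s.1.orderEmbOfFin s.2 m' := by simpa using h
    have h₂ : (2 * b - 2) * (m + 1) ≤ (2 * b - 2) * m' := Nat.mul_le_mul_left _ h
    simp only [spreadPositions, Fin.lt_def] at h₁ ⊢
    rw [Nat.mul_succ] at h₂
    omega
  add_le m := by
    have h₁ := (s.1.orderEmbOfFin s.2 m).2
    have h₂ : (2 * b - 2) * (m + 1) ≤ (2 * b - 2) * t := Nat.mul_le_mul_left _ m.2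
    simp only [spreadPositions]
    rw [Nat.mul_succ] at h₂
    omega

lemma spreadPositions_injective (b : ℕ) {N t : ℕ} :
    Function.Injective (spreadPositions (N := N) (t := t) b) := by
  intro s s' h
  have hemb : ⇑(s.1.orderEmbOfFin s.2) = s'.1.orderEmbOfFin s'.2 := by
    funext m
    have := congrFun h m
    simp only [spreadPositions] at this
    exact Fin.ext (by omega)
  apply Subtype.ext
  apply coe_injective
  rw [← range_orderEmbOfFin s.1 s.2, ← range_orderEmbOfFin s'.1 s'.2, hemb]

lemma Fintype.card_subtype_apply_ne_zero {ι M : Type*} [Fintype ι] [DecidableEq ι] [Fintype M]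
    [Zero M] [DecidableEq M] (i : ι) :
    Fintype.card {v : ι → M // v i ≠ 0}
      = Fintype.card M ^ Fintype.card ι - Fintype.card M ^ (Fintype.card ι - 1) := by
  rw [Fintype.card_subtype_compl, Fintype.card_fun, Fintype.card_subtype, ← Fintype.piFinset_univ,
    card_filter_piFinset_const_eq_of_mem _ _ (mem_univ 0), card_univ]

lemma choose_mul_le_ncard_bset [Fintype G] [NeZero n] [NeZero b] {N : ℕ}
    (hN : N + (2 * b - 2) * t ≤ n) :
    N.choose t * (Fintype.card G ^ b - Fintype.card G ^ (b - 1)) ^ t ≤ (BSet n b t G).ncard := by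
  classical
  let word (d : {s : Finset (Fin N) // #s = t} × (Fin t → {v : Fin b → G // v 0 ≠ 0})) :
      BSet n b t G :=
    ⟨spacedWord n (spreadPositions b d.1) fun m => (d.2 m).1,
      (isWellSpaced_spreadPositions hN d.1).spacedWord_mem_bset _⟩
  have hword : Function.Injective word := by
    rintro ⟨s, c⟩ ⟨s', c'⟩ h
    obtain ⟨hP, hc⟩ := (isWellSpaced_spreadPositions hN s).spacedWord_inj
      (isWellSpaced_spreadPositions hN s') (fun m => (c m).2) (fun m => (c' m).2)
      (congrArg Subtype.val h)
    obtain rfl := spreadPositions_injective b hP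
    obtain rfl : c = c' := funext fun m => Subtype.ext (congrFun hc m)
    rfl
  calc N.choose t * (Fintype.card G ^ b - Fintype.card G ^ (b - 1)) ^ t
      = Nat.card ({s : Finset (Fin N) // #s = t} × (Fin t → {v : Fin b → G // v 0 ≠ 0})) := by
        rw [Nat.card_eq_fintype_card, Fintype.card_prod, Fintype.card_finset_len,
          Fintype.card_fun, Fintype.card_subtype_apply_ne_zero]
        simp only [Fintype.card_fin]
    _ ≤ Nat.card (BSet n b t G) := Nat.card_le_card_of_injective word hword
    _ = (BSet n b t G).ncard := Nat.card_coe_set_eq _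

end Lower

lemma one_sub_inv_mul_pow_sub_one_le {q : ℝ} (hq : 1 ≤ q) {b : ℕ} (hb : b ≠ 0) :
    (1 - 1 / q) * (q ^ b - 1) ≤ q ^ b - q ^ (b - 1) := by
  obtain ⟨b, rfl⟩ : ∃ c, b = c + 1 := ⟨b - 1, by omega⟩
  have h1q : 1 / q ≤ 1 := (div_le_one (by linarith)).2 hq
  have hexp : (1 - 1 / q) * (q ^ (b + 1) - 1) = q ^ (b + 1) - q ^ b - (1 - 1 / q) := by
    field_simp
    ring
  rw [Nat.add_sub_cancel, hexp]
  linarith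

/-- for all n ≥ 2bt,
(1−1/q)^t (q^b−1)^t C(n−(2b−2)t, t) ≤ |B_{≤t,≤b}| ≤ (t+1)(q^b−1)^t C(n, t). -/
theorem bset_size_bounds {G : Type*} [AddCommGroup G] [Fintype G] (q t b : ℕ)
    (hq : Fintype.card G = q) (hq2 : 2 ≤ q) (hb : 1 ≤ b) (ht : 1 ≤ t) :
    ∀ n : ℕ, 2 * b * t ≤ n →
      (1 - 1 / (q : ℝ)) ^ t * ((q : ℝ) ^ b - 1) ^ t * (Nat.choose (n - (2 * b - 2) * t) t : ℝ)
          ≤ ((BSet n b t G).ncard : ℝ) ∧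
      ((BSet n b t G).ncard : ℝ) ≤ (t + 1) * ((q : ℝ) ^ b - 1) ^ t * (Nat.choose n t : ℝ) := by
  intro n hn
  have hbn : b ≤ 2 * b * t := by nlinarith
  have htn : 2 * t ≤ 2 * b * t := by nlinarith
  have hbt : (2 * b - 2) * t ≤ 2 * b * t := Nat.mul_le_mul_right t (Nat.sub_le _ _)
  have : NeZero n := ⟨by omega⟩
  have : NeZero b := ⟨by omega⟩
  have hq1 : (1 : ℝ) ≤ q := by exact_mod_cast (by omega : 1 ≤ q)
  constructor
  · have hlow := choose_mul_le_ncard_bset (G := G) (n := n) (b := b) (t := t)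
      (N := n - (2 * b - 2) * t) (by omega)
    rw [hq, ← Nat.cast_le (α := ℝ), Nat.cast_mul, Nat.cast_pow,
      Nat.cast_sub (Nat.pow_le_pow_right (by omega : 0 < q) (Nat.sub_le b 1))] at hlow
    push_cast at hlow
    refine le_trans ?_ hlow
    rw [← mul_pow, mul_comm]
    gcongr
    · exact mul_nonneg (sub_nonneg.2 ((div_le_one (by linarith)).2 hq1))
        (sub_nonneg.2 (one_le_pow₀ hq1))
    · exact one_sub_inv_mul_pow_sub_one_le hq1 (NeZero.ne b)
  · have hup := ncard_bset_le (G := G) (t := t) (hbn.trans hn) (htn.trans hn) (NeZero.ne b)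
      (hq ▸ hq2)
    rw [hq, ← Nat.cast_le (α := ℝ)] at hup
    push_cast [Nat.one_le_pow _ _ (by omega : 0 < q)] at hup
    linarith
end

section
/- Disjoint-interval representation is unique for well-separated bursts: if I = {(p_1,ℓ_1),…,(p_k,ℓ_k)} and I' = {(p'_1,ℓ'_1),…,(p'_k,ℓ'_k)} are two collections of k exact burst placements in which consecutive starting positions cyclically differ by at least 2b−1 (with ℓ_i ≤ b), and some error vector is consistent with both placements (nonzero exactly at the endpoints of each burst interval, supported in the union of the intervals), then I = I'. -/
open scoped BigOperators

/-- A well-separated collection of k exact burst placements: starting positions are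
strictly increasing, lie in [0,n), lengths are in [1,b], and cyclically consecutive
starting positions differ by at least 2b−1 (with wrap-around p_{k+1} = p_1 + n). -/
def WellSeparatedPlacements (n b k : ℕ) (p ℓ : Fin k → ℕ) : Prop :=
  StrictMono p ∧ (∀ i, p i < n) ∧ (∀ i, 1 ≤ ℓ i ∧ ℓ i ≤ b) ∧
  ∀ i : Fin k, p i + (2 * b - 1) ≤
    (if h : i.1 + 1 < k then p ⟨i.1 + 1, h⟩ else p ⟨0, i.pos⟩ + n)

/-- e is consistent with the placements: supported in the union of the intervals, and
nonzero at both endpoints of each burst interval. -/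
def ConsistentWithPlacements {G : Type*} [AddCommGroup G] {n : ℕ} (k : ℕ)
    (p ℓ : Fin k → ℕ) (e : ZMod n → G) : Prop :=
  (∀ j : ZMod n, e j ≠ 0 → ∃ i : Fin k, j ∈ cycInt n ((p i : ZMod n)) (ℓ i)) ∧
  ∀ i : Fin k, e ((p i : ZMod n)) ≠ 0 ∧ e (((p i + ℓ i - 1 : ℕ) : ZMod n)) ≠ 0


private lemma modeq_window {n L a c : ℕ} (ha : L ≤ a) (ha' : a < L + n)
    (hc : L ≤ c) (hc' : c < L + n) (h : a ≡ c [MOD n]) : a = c := by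
  rcases le_total a c with hle | hle
  · have hd : n ∣ c - a := (Nat.modEq_iff_dvd' hle).mp h
    have := Nat.eq_zero_of_dvd_of_lt hd (by omega)
    omega
  · have hd : n ∣ a - c := (Nat.modEq_iff_dvd' hle).mp h.symm
    have := Nat.eq_zero_of_dvd_of_lt hd (by omega)
    omega

private lemma sep_lemma {n b k : ℕ} {p ℓ : Fin k → ℕ}
    (hP : WellSeparatedPlacements n b k p ℓ) {i m : Fin k} (him : i < m) :
    p i + (2 * b - 1) ≤ p m := by
  obtain ⟨hmono, -, -, h4⟩ := hP
  have hilt : i.1 < m.1 := him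
  have h1 : i.1 + 1 < k := by omega
  have hstep := h4 i
  rw [dif_pos h1] at hstep
  have hle : p ⟨i.1 + 1, h1⟩ ≤ p m := hmono.monotone (by simp [Fin.le_def]; omega)
  omega

private lemma wrap_lemma {n b k : ℕ} {p ℓ : Fin k → ℕ}
    (hP : WellSeparatedPlacements n b k p ℓ) (hk : 0 < k)
    (i : Fin k) : p i + (2 * b - 1) ≤ p ⟨0, hk⟩ + n := by
  obtain ⟨hmono, -, -, h4⟩ := hP
  have hlt : k - 1 < k := by omega
  have hlast : p ⟨k - 1, hlt⟩ + (2 * b - 1) ≤ p ⟨0, hk⟩ + n := by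
    have h := h4 ⟨k - 1, hlt⟩
    rwa [dif_neg (show ¬(k - 1 + 1 < k) by omega)] at h
  have hle : p i ≤ p ⟨k - 1, hlt⟩ := hmono.monotone (by simp [Fin.le_def]; omega)
  omega

private lemma window_key {n b k : ℕ} {p ℓ : Fin k → ℕ}
    (hP : WellSeparatedPlacements n b k p ℓ) (hk : 0 < k) (hb : 1 ≤ b)
    {i m : Fin k} {t s : ℕ} (ht : t ≤ 2 * b - 2) (hs : s < ℓ m)
    (hcong : p i + t ≡ p m + s [MOD n]) : m = i ∧ t = s := by
  have hsb : ℓ m ≤ b := (hP.2.2.1 m).2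
  have h0i : p ⟨0, hk⟩ ≤ p i := hP.1.monotone (by simp [Fin.le_def])
  have h0m : p ⟨0, hk⟩ ≤ p m := hP.1.monotone (by simp [Fin.le_def])
  have hwi := wrap_lemma hP hk i
  have hwm := wrap_lemma hP hk m
  have heq : p i + t = p m + s :=
    modeq_window (L := p ⟨0, hk⟩) (by omega) (by omega) (by omega) (by omega) hcong
  rcases lt_trichotomy i m with h | h | h
  · have := sep_lemma hP h; omega
  · subst h; exact ⟨rfl, by omega⟩
  · have := sep_lemma hP h; omega

private lemma mem_cycInt_modeq {n : ℕ} {a c L : ℕ}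
    (h : (c : ZMod n) ∈ cycInt n (a : ZMod n) L) :
    ∃ s, s < L ∧ c ≡ a + s [MOD n] := by
  obtain ⟨s, hs, hj⟩ := h
  refine ⟨s, hs, ?_⟩
  have : (c : ZMod n) = ((a + s : ℕ) : ZMod n) := by push_cast; exact hj
  exact (ZMod.natCast_eq_natCast_iff _ _ _).mp this

private lemma key_step {G : Type*} [AddCommGroup G] {n b k : ℕ} (hb : 1 ≤ b) (hk : 0 < k)
    {p ℓ p' ℓ' : Fin k → ℕ}
    (hP : WellSeparatedPlacements n b k p ℓ)
    (hP' : WellSeparatedPlacements n b k p' ℓ')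
    {e : ZMod n → G}
    (he : ConsistentWithPlacements k p ℓ e)
    (he' : ConsistentWithPlacements k p' ℓ' e)
    (j : Fin k) :
    ∃ i s, s + ℓ' j ≤ ℓ i ∧ p' j ≡ p i + s [MOD n] := by
  obtain ⟨hne1, hne2⟩ := he'.2 j
  obtain ⟨i, hi⟩ := he.1 _ hne1
  obtain ⟨m, hm⟩ := he.1 _ hne2
  obtain ⟨s, hs, c1⟩ := mem_cycInt_modeq hi
  obtain ⟨u, hu, c2⟩ := mem_cycInt_modeq hm
  have hl'j : 1 ≤ ℓ' j := (hP'.2.2.1 j).1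
  have hl'jb : ℓ' j ≤ b := (hP'.2.2.1 j).2
  have hlib : ℓ i ≤ b := (hP.2.2.1 i).2
  have c3 : p i + (s + (ℓ' j - 1)) ≡ p m + u [MOD n] := by
    have e1 : p i + (s + (ℓ' j - 1)) = (p i + s) + (ℓ' j - 1) := by omega
    have e2 : p' j + (ℓ' j - 1) = p' j + ℓ' j - 1 := by omega
    rw [e1]
    exact ((c1.symm.add_right (ℓ' j - 1)).trans (by rw [e2]; exact c2))
  obtain ⟨hmi, he2⟩ := window_key hP hk hb (t := s + (ℓ' j - 1)) (by omega) hu c3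
  refine ⟨i, s, ?_, c1⟩
  subst hmi
  omega

/-- a well-separated disjoint-interval representation is unique: if an error
vector is consistent with two well-separated collections of k placements, they coincide. -/
theorem wellSeparated_placements_unique {G : Type*} [AddCommGroup G] {n : ℕ}
    (b k : ℕ) (hb : 1 ≤ b) (hn : 1 ≤ n)
    (p ℓ p' ℓ' : Fin k → ℕ)
    (hP : WellSeparatedPlacements n b k p ℓ)
    (hP' : WellSeparatedPlacements n b k p' ℓ')
    (e : ZMod n → G)
    (he : ConsistentWithPlacements k p ℓ e)
    (he' : ConsistentWithPlacements k p' ℓ' e) :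
    p = p' ∧ ℓ = ℓ' := by
  rcases Nat.eq_zero_or_pos k with rfl | hk
  · exact ⟨funext fun i => i.elim0, funext fun i => i.elim0⟩
  choose σ s hsl hscong using fun j => key_step hb hk hP hP' he he' j
  choose τ u hul hucong using fun j => key_step hb hk hP' hP he' he j
  have key : ∀ (p ℓ p' ℓ' : Fin k → ℕ), WellSeparatedPlacements n b k p ℓ →
      WellSeparatedPlacements n b k p' ℓ' → ∀ (σ τ : Fin k → Fin k) (s u : Fin k → ℕ),
      (∀ j, s j + ℓ' j ≤ ℓ (σ j)) → (∀ j, p' j ≡ p (σ j) + s j [MOD n]) →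
      (∀ j, u j + ℓ j ≤ ℓ' (τ j)) → (∀ j, p j ≡ p' (τ j) + u j [MOD n]) →
      ∀ j, p' j = p (σ j) ∧ ℓ' j = ℓ (σ j) ∧ τ (σ j) = j := by
    intro p ℓ p' ℓ' hP hP' σ τ s u hsl hscong hul hucong j
    have hl'j : 1 ≤ ℓ' j := (hP'.2.2.1 j).1
    have hA := hsl j
    have hB := hul (σ j)
    have hltb : ℓ' (τ (σ j)) ≤ b := (hP'.2.2.1 (τ (σ j))).2
    have c : p' j + 0 ≡ p' (τ (σ j)) + (u (σ j) + s j) [MOD n] := by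
      have h1 := (hucong (σ j)).add_right (s j)
      have h2 := (hscong j).trans h1
      have e1 : p' (τ (σ j)) + u (σ j) + s j = p' (τ (σ j)) + (u (σ j) + s j) := by omega
      have e2 : p' j + 0 = p' j := by omega
      rw [e1] at h2; rw [e2]; exact h2
    have hhs : u (σ j) + s j < ℓ' (τ (σ j)) := by omega
    have hht : 0 ≤ 2 * b - 2 := by omega
    obtain ⟨hts, hzero⟩ := window_key hP' hk hb (i := j) (m := τ (σ j)) (t := 0)
      (s := u (σ j) + s j) hht hhs c
    have hs0 : s j = 0 := by omega
    have hpeq : p' j = p (σ j) := by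
      have hc := hscong j
      rw [hs0] at hc
      exact modeq_window (n := n) (L := 0) (a := p' j) (c := p (σ j))
        (by omega) (by have := hP'.2.1 j; omega) (by omega)
        (by have := hP.2.1 (σ j); omega) (by simpa using hc)
    refine ⟨hpeq, ?_, hts⟩
    have hC := hul (σ j)
    rw [hts] at hC
    omega
  have key1 := key p ℓ p' ℓ' hP hP' σ τ s u hsl hscong hul hucong
  have key2 := key p' ℓ' p ℓ hP' hP τ σ u s hul hucong hsl hscong
  have hσmono : StrictMono σ := by
    intro a a' haa
    have h1 : p' a < p' a' := hP'.1 haa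
    rw [(key1 a).1, (key1 a').1] at h1
    exact hP.1.lt_iff_lt.mp h1
  have hτmono : StrictMono τ := by
    intro a a' haa
    have h1 : p a < p a' := hP.1 haa
    rw [(key2 a).1, (key2 a').1] at h1
    exact hP'.1.lt_iff_lt.mp h1
  haveI inst : WellFoundedLT (Fin k) := inferInstance
  have hσid : ∀ j, σ j = j := by
    intro j
    have h1 : j ≤ σ j := hσmono.le_apply
    have h2 : σ j ≤ τ (σ j) := hτmono.le_apply
    rw [(key1 j).2.2] at h2
    exact le_antisymm h2 h1
  constructor
  · funext j
    have h := (key1 j).1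
    rw [hσid j] at h
    exact h.symm
  · funext j
    have h := (key1 j).2.1
    rw [hσid j] at h
    exact h.symm
end

section
/- If a sequence of codes C_n ⊆ Σ_q^n over the channel introducing at most t bursts of length ≤ b has reconstruction degree N_t(C_n) = o(n^{s+1}), then for all sufficiently large n the code C_n is a (t−s−1,b)-burst-correcting code; equivalently, the difference set C_n^Δ = {x − y : x, y ∈ C_n, x ≠ y} is disjoint from B_{≤2(t−s−1),≤b}. -/
open scoped BigOperators

/-!
If two distinct codewords `u, v` had a common point `z` at burst distance `≤ r := t - s - 1`,
then for each of the `n.choose (s + 1)` sets `S` of `s + 1` coordinates, `z` minus a fixed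
nonzero symbol on `S` would lie at distance `≤ t` from both, so the radius-`t` balls would share
at least `n.choose (s + 1) ≥ n ^ (s + 1) / (2 ^ (s + 1) (s + 1)!)` points, against
`N_t(C_n) = o(n ^ (s + 1))`. A difference `x - y` made of at most `2r` bursts splits into two
halves of at most `r` bursts each, which produces such a point `z`.
-/

section BurstAlgebra

variable {G : Type*} [AddCommGroup G] {n b : ℕ}

lemma isBurst_zero : IsBurst b (0 : ZMod n → G) :=
  ⟨0, 0, Nat.zero_le b, fun _ h => (h rfl).elim⟩

lemma isBurst_single (hb : 1 ≤ b) (i : ZMod n) (g : G) : IsBurst b (Pi.single i g) := by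
  refine ⟨i, 1, hb, fun j hj => ⟨0, Nat.one_pos, ?_⟩⟩
  by_contra hji
  simp_all [Pi.single_apply]

lemma sumOfBursts_zero (k : ℕ) : SumOfBursts b k (0 : ZMod n → G) :=
  ⟨List.replicate k 0, List.length_replicate, fun _ he => List.eq_of_mem_replicate he ▸ isBurst_zero,
    by simp⟩

lemma SumOfBursts.add {k l : ℕ} {w w' : ZMod n → G} (h : SumOfBursts b k w)
    (h' : SumOfBursts b l w') : SumOfBursts b (k + l) (w + w') := by
  obtain ⟨L, rfl, hL, rfl⟩ := h
  obtain ⟨L', rfl, hL', rfl⟩ := h'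
  exact ⟨L ++ L', List.length_append, fun e he => (List.mem_append.1 he).elim (hL e) (hL' e),
    List.sum_append⟩

lemma SumOfBursts.neg {k : ℕ} {w : ZMod n → G} (h : SumOfBursts b k w) :
    SumOfBursts b k (-w) := by
  obtain ⟨L, rfl, hL, rfl⟩ := h
  refine ⟨L.map fun e => -e, List.length_map _, ?_, (List.sum_neg L).symm⟩
  simp only [List.mem_map]
  rintro _ ⟨e, he, rfl⟩
  obtain ⟨i, l, hl, hsupp⟩ := hL e he
  exact ⟨i, l, hl, fun j hj => hsupp j (by simpa using hj)⟩

lemma SumOfBursts.mono {k l : ℕ} {w : ZMod n → G} (h : SumOfBursts b k w) (hkl : k ≤ l) :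
    SumOfBursts b l w := by
  simpa [Nat.add_sub_cancel' hkl] using h.add (sumOfBursts_zero (l - k))

lemma SumOfBursts.exists_add {k l : ℕ} {w : ZMod n → G} (h : SumOfBursts b (k + l) w) :
    ∃ w₁ w₂, SumOfBursts b k w₁ ∧ SumOfBursts b l w₂ ∧ w₁ + w₂ = w := by
  obtain ⟨L, hlen, hL, rfl⟩ := h
  refine ⟨(L.take k).sum, (L.drop k).sum, ⟨L.take k, by simp [hlen], ?_, rfl⟩,
    ⟨L.drop k, by simp [hlen], ?_, rfl⟩, by rw [← List.sum_append, List.take_append_drop]⟩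
  · exact fun e he => hL e (List.mem_of_mem_take he)
  · exact fun e he => hL e (List.mem_of_mem_drop he)

/-- Splitting `w` into its coordinates: one single-entry burst per point of `S`. -/
lemma sumOfBursts_of_support_subset (hb : 1 ≤ b) {w : ZMod n → G} {S : Finset (ZMod n)}
    (hS : Function.support w ⊆ S) : SumOfBursts b S.card w := by
  classical
  refine ⟨S.toList.map fun i => Pi.single i (w i), by simp, ?_, ?_⟩
  · simp only [List.mem_map]
    rintro _ ⟨i, -, rfl⟩
    exact isBurst_single hb i (w i)
  · rw [Finset.sum_map_toList]
    funext j
    rw [Finset.sum_apply, Finset.sum_pi_single]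
    split_ifs with hj
    · rfl
    · exact (Function.notMem_support.1 fun h => hj (hS h)).symm

lemma SumOfDisjointBursts.sumOfBursts {k : ℕ} {w : ZMod n → G}
    (h : SumOfDisjointBursts b k w) : SumOfBursts b k w := by
  obtain ⟨es, ps, Ls, hburst, -, rfl⟩ := h
  refine ⟨List.ofFn es, List.length_ofFn, ?_, List.sum_ofFn⟩
  rw [List.forall_mem_ofFn_iff]
  exact fun m => ⟨ps m, Ls m, hburst m⟩

end BurstAlgebra

section BurstDist

variable {G : Type*} [AddCommGroup G] {n b : ℕ}

lemma burstDist_le {k : ℕ} {x y : ZMod n → G} (h : SumOfBursts b k (x - y)) :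
    burstDist b x y ≤ k :=
  Nat.sInf_le h

lemma burstDist_le_of_sub_mem_BSet {k : ℕ} {x y : ZMod n → G} (h : x - y ∈ BSet n b k G) :
    burstDist b x y ≤ k :=
  let ⟨_, hi, hsum⟩ := h
  (burstDist_le hsum.sumOfBursts).trans hi

variable [NeZero n]

lemma sumOfBursts_burstDist (hb : 1 ≤ b) (x y : ZMod n → G) :
    SumOfBursts b (burstDist b x y) (x - y) :=
  Nat.sInf_mem (s := {k | SumOfBursts b k (x - y)})
    ⟨_, sumOfBursts_of_support_subset (S := Finset.univ) hb (by simp)⟩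

lemma burstDist_comm (hb : 1 ≤ b) (x y : ZMod n → G) : burstDist b x y = burstDist b y x :=
  have h (x y : ZMod n → G) : burstDist b y x ≤ burstDist b x y :=
    burstDist_le (neg_sub x y ▸ (sumOfBursts_burstDist hb x y).neg)
  le_antisymm (h y x) (h x y)

lemma burstDist_triangle (hb : 1 ≤ b) (x y z : ZMod n → G) :
    burstDist b x z ≤ burstDist b x y + burstDist b y z :=
  burstDist_le (sub_add_sub_cancel x y z ▸
    (sumOfBursts_burstDist hb x y).add (sumOfBursts_burstDist hb y z))

lemma burstBall_subset_burstBall (hb : 1 ≤ b) {r k : ℕ} {u z : ZMod n → G}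
    (hz : z ∈ burstBall b r u) : burstBall b k z ⊆ burstBall b (r + k) u :=
  fun _ hw => (burstDist_triangle hb _ z _).trans (add_le_add hz hw)

lemma burstBall_inter_nonempty (hb : 1 ≤ b) {r r' : ℕ} {x y : ZMod n → G}
    (h : burstDist b x y ≤ r + r') : (burstBall b r x ∩ burstBall b r' y).Nonempty := by
  obtain ⟨w₁, w₂, h₁, h₂, hw⟩ := ((sumOfBursts_burstDist hb x y).mono h).exists_add
  refine ⟨x - w₁, burstDist_le (by rwa [sub_sub_cancel]), ?_⟩
  have hw₂ : x - w₁ - y = w₂ := by rw [sub_right_comm, ← hw, add_sub_cancel_left]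
  exact (burstDist_comm hb _ _).trans_le (burstDist_le (hw₂ ▸ h₂))

/-- The points `z - 1_S • g` for `|S| = k` are distinct and within distance `k` of `z`. -/
lemma choose_le_ncard_burstBall [Finite G] [Nontrivial G] (hb : 1 ≤ b) (k : ℕ)
    (z : ZMod n → G) : n.choose k ≤ (burstBall b k z).ncard := by
  obtain ⟨g, hg⟩ := exists_ne (0 : G)
  set f : Finset (ZMod n) → ZMod n → G := fun S => z - (S : Set (ZMod n)).indicator fun _ => g
  have hmem : ∀ S ∈ ((Finset.univ : Finset (ZMod n)).powersetCard k : Set (Finset (ZMod n))),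
      f S ∈ burstBall b k z := by
    intro S hS
    rw [Finset.mem_coe, Finset.mem_powersetCard] at hS
    refine burstDist_le ?_
    rw [sub_sub_cancel, ← hS.2]
    exact sumOfBursts_of_support_subset hb Set.support_indicator_subset
  have hinj : Set.InjOn f ((Finset.univ : Finset (ZMod n)).powersetCard k : Set (Finset (ZMod n))) := by
    intro S _ S' _ hSS'
    ext j
    have hj := congrFun (sub_right_injective hSS') j
    by_cases h : j ∈ S <;> by_cases h' : j ∈ S' <;> simp_all [Set.indicator]
  have hcard := Set.ncard_le_ncard_of_injOn f hmem hinj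
  rwa [Set.ncard_coe_finset, Finset.card_powersetCard, Finset.card_univ, ZMod.card] at hcard

lemma choose_le_ncard_inter_burstBall [Finite G] [Nontrivial G] (hb : 1 ≤ b) {r : ℕ} (k : ℕ)
    {u v : ZMod n → G} (h : (burstBall b r u ∩ burstBall b r v).Nonempty) :
    n.choose k ≤ (burstBall b (r + k) u ∩ burstBall b (r + k) v).ncard :=
  let ⟨_, hu, hv⟩ := h
  (choose_le_ncard_burstBall hb k _).trans <| Set.ncard_le_ncard <|
    Set.subset_inter (burstBall_subset_burstBall hb hu) (burstBall_subset_burstBall hb hv)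

end BurstDist

open Nat in
lemma pow_div_le_choose {n k : ℕ} (hkn : 2 * k ≤ n) :
    (n : ℝ) ^ k / (2 ^ k * k !) ≤ n.choose k := by
  have hhalf : (n : ℝ) / 2 ≤ ((n + 1 - k : ℕ) : ℝ) := by
    have hkn' : 2 * (k : ℝ) ≤ n := by exact_mod_cast hkn
    rw [Nat.cast_sub (by omega)]
    push_cast
    linarith
  calc (n : ℝ) ^ k / (2 ^ k * k !) = ((n : ℝ) / 2) ^ k / k ! := by rw [div_pow, div_div]
    _ ≤ ((n + 1 - k : ℕ) : ℝ) ^ k / k ! := by gcongr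
    _ ≤ n.choose k := Nat.pow_le_choose k n

/-- if a sequence of codes over the t-burst channel has reconstruction degree
N_t(C_n) = o(n^{s+1}), then for all sufficiently large n the code C_n is a
(t−s−1,b)-burst-correcting code; equivalently its difference set avoids
B_{≤2(t−s−1),≤b}. -/
theorem small_reconstruction_degree_implies_correcting {G : Type*} [AddCommGroup G]
    [Fintype G] (q t b s : ℕ) (hq : Fintype.card G = q) (hq2 : 2 ≤ q) (hb : 1 ≤ b)
    (hs : s + 1 ≤ t)
    (C : ∀ n : ℕ, Set (ZMod n → G))
    (hN : ∀ ε : ℝ, 0 < ε → ∃ n₀ : ℕ, ∀ n ≥ n₀, ∀ u ∈ C n, ∀ v ∈ C n, u ≠ v →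
      ((burstBall b t u ∩ burstBall b t v).ncard : ℝ) + 1 ≤ ε * (n : ℝ) ^ (s + 1)) :
    ∃ n₀ : ℕ, ∀ n ≥ n₀,
      IsBurstCorrecting (t - s - 1) b (C n) ∧
      ∀ x ∈ C n, ∀ y ∈ C n, x ≠ y → x - y ∉ BSet n b (2 * (t - s - 1)) G := by
  have : Nontrivial G := Fintype.one_lt_card_iff_nontrivial.1 (by omega)
  obtain ⟨n₀, hn₀⟩ := hN (1 / (2 ^ (s + 1) * (s + 1).factorial)) (by positivity)
  refine ⟨max n₀ (2 * (s + 1)), fun n hn => ?_⟩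
  have : NeZero n := ⟨by omega⟩
  have hdisj : IsBurstCorrecting (t - s - 1) b (C n) := by
    intro u hu v hv huv
    by_contra hne
    have hcount := choose_le_ncard_inter_burstBall hb (s + 1) (Set.nonempty_iff_ne_empty.2 hne)
    rw [show t - s - 1 + (s + 1) = t by omega] at hcount
    have hsmall := hn₀ n (le_of_max_le_left hn) u hu v hv huv
    have hlarge := pow_div_le_choose (le_of_max_le_right hn)
    rw [one_div_mul_eq_div] at hsmall
    have : (n.choose (s + 1) : ℝ) ≤ _ := Nat.cast_le.2 hcount
    linarith
  refine ⟨hdisj, fun x hx y hy hxy hmem => ?_⟩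
  have hmid := burstBall_inter_nonempty (r := t - s - 1) hb
    ((burstDist_le_of_sub_mem_BSet hmem).trans_eq (two_mul _))
  exact hmid.ne_empty (hdisj x hx y hy hxy)
end

section
/- If C ⊆ Σ_q^n is a (t−s−1,b)-burst-correcting code with 0 ≤ s ≤ t−1 and q, t, b fixed, then for any two distinct codewords x, y ∈ C, the intersection of their radius-t burst balls satisfies |Ball_{t,b}(x) ∩ Ball_{t,b}(y)| = O(n^s); hence the reconstruction degree of C over the t-burst channel is O(n^s). -/
open scoped BigOperators

/-!
Let `x ≠ y` be codewords and `z` lie in both balls, so that `x - z` and `z - y` are sums of at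
most `t` bursts each. Call such a burst far if it misses the support of `x - y`. Restricted to that
support, the far bursts vanish and the others remain bursts adding up to `x - y`, so the distance
`≥ 2t - 2s - 1` leaves at most `2s + 1` far bursts, hence at most `s` on one side. The other
bursts stay within distance `b - 1` of the support of `x - y`, a set of `O(1)` positions because
`x - y` itself is a sum of at most `2t` bursts. So `z` is determined by one of `n ^ s` choices
of starting points for the far bursts of one side together with `O(1)` symbols.
-/

open Function

lemma List.exists_mem_support_of_mem_support_sum {α M : Type*} [AddMonoid M]
    {l : List (α → M)} {j : α} (h : j ∈ support l.sum) : ∃ e ∈ l, j ∈ support e := by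
  rw [mem_support, Pi.list_sum_apply] at h
  obtain ⟨_, hmem, hne⟩ := List.exists_mem_ne_zero_of_sum_ne_zero h
  obtain ⟨e, he, rfl⟩ := List.mem_map.1 hmem
  exact ⟨e, he, hne⟩

lemma ncard_setOf_support_sub_subset_le {α G : Type*} [AddGroup G] [Finite G] (a : α → G)
    {D : Set α} (hD : D.Finite) :
    {z | support (a - z) ⊆ D}.ncard ≤ Nat.card G ^ D.ncard := by
  have : Finite D := hD
  calc {z | support (a - z) ⊆ D}.ncard ≤ (Set.univ : Set (D → G)).ncard := by
        refine Set.ncard_le_ncard_of_injOn (fun z (j : D) => z j) (fun _ _ => trivial) ?_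
        intro z₁ h₁ z₂ h₂ h
        funext j
        by_cases hj : j ∈ D
        · exact congrFun h ⟨j, hj⟩
        · have e₁ := sub_eq_zero.1 (notMem_support.1 fun h => hj (h₁ h))
          have e₂ := sub_eq_zero.1 (notMem_support.1 fun h => hj (h₂ h))
          exact e₁.symm.trans e₂
    _ = Nat.card G ^ D.ncard := by rw [Set.ncard_univ, Nat.card_fun, Nat.card_coe_set_eq]

section Bursts

variable {G : Type*} [AddCommGroup G] {n b : ℕ}

lemma cycInt_mono (i : ZMod n) {L L' : ℕ} (h : L ≤ L') : cycInt n i L ⊆ cycInt n i L' :=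
  fun _ ⟨k, hk, hj⟩ => ⟨k, hk.trans_le h, hj⟩

lemma ncard_cycInt_le (i : ZMod n) (L : ℕ) : (cycInt n i L).ncard ≤ L := by
  have : cycInt n i L = (fun k : ℕ => i + k) '' Set.Iio L := by
    ext j
    simp [cycInt, eq_comm]
  rw [this]
  exact (Set.ncard_image_le (Set.finite_Iio L)).trans (by simp)

lemma ncard_iUnion_cycInt_le {k : ℕ} (p : Fin k → ZMod n) (L : ℕ) :
    (⋃ m, cycInt n (p m) L).ncard ≤ k * L :=
  calc (⋃ m, cycInt n (p m) L).ncard ≤ ∑ m, (cycInt n (p m) L).ncard :=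
        Set.ncard_iUnion_le_of_fintype _
    _ ≤ ∑ _m : Fin k, L := Finset.sum_le_sum fun m _ => ncard_cycInt_le _ _
    _ = k * L := by simp

lemma IsBurst.exists_support_subset {e : ZMod n → G} (he : IsBurst b e) :
    ∃ i, support e ⊆ cycInt n i b := by
  obtain ⟨i, L, hL, he⟩ := he
  exact ⟨i, fun j hj => cycInt_mono i hL (he j hj)⟩

lemma IsBurst.of_support_subset {e e' : ZMod n → G} (he : IsBurst b e)
    (h : support e' ⊆ support e) : IsBurst b e' := by
  obtain ⟨i, L, hL, he⟩ := he
  exact ⟨i, L, hL, fun j hj => he j (h hj)⟩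

lemma IsBurst.neg {e : ZMod n → G} (he : IsBurst b e) : IsBurst b (-e) :=
  he.of_support_subset (support_neg e).subset

lemma exists_sumOfBursts [NeZero n] (hb : 1 ≤ b) (w : ZMod n → G) : ∃ m, SumOfBursts b m w := by
  classical
  refine ⟨_, Finset.univ.toList.map fun j => Pi.single j (w j), rfl, ?_, ?_⟩
  · simp only [List.mem_map]
    rintro _ ⟨j, -, rfl⟩
    refine ⟨j, 1, hb, fun j' hj' => ⟨0, one_pos, ?_⟩⟩
    simpa using Pi.support_single_subset hj'
  · rw [Finset.sum_map_toList, Finset.univ_sum_single]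

lemma burstDist_le_of_sumOfBursts {x y : ZMod n → G} {m : ℕ} (h : SumOfBursts b m (x - y)) :
    burstDist b x y ≤ m :=
  Nat.sInf_le h

lemma exists_list_of_burstDist_le [NeZero n] (hb : 1 ≤ b) {x y : ZMod n → G} {t : ℕ}
    (h : burstDist b x y ≤ t) :
    ∃ l : List (ZMod n → G), l.length ≤ t ∧ (∀ e ∈ l, IsBurst b e) ∧ l.sum = x - y := by
  obtain ⟨l, hlen, hl, hsum⟩ := Nat.sInf_mem (exists_sumOfBursts hb (x - y))
  exact ⟨l, hlen ▸ h, hl, hsum⟩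

lemma exists_cover_of_isBurst {l : List (ZMod n → G)} (hl : ∀ e ∈ l, IsBurst b e) {k : ℕ}
    (hk : l.length ≤ k) : ∃ p : Fin k → ZMod n, ∀ e ∈ l, ∃ m, support e ⊆ cycInt n (p m) b := by
  choose i hi using fun e (he : e ∈ l) => (hl e he).exists_support_subset
  refine ⟨fun m => if h : (m : ℕ) < l.length then i l[m] (l.getElem_mem h) else 0,
    fun e he => ?_⟩
  obtain ⟨m, hm, rfl⟩ := List.getElem_of_mem he
  exact ⟨⟨m, hm.trans_le hk⟩, by simpa [hm] using hi _ (l.getElem_mem hm)⟩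

def burstNbhd (b : ℕ) (w : ZMod n → G) : Set (ZMod n) :=
  {j | ∃ i, j ∈ cycInt n i b ∧ ∃ j' ∈ cycInt n i b, w j' ≠ 0}

lemma IsBurst.support_subset_burstNbhd {e w : ZMod n → G} (he : IsBurst b e)
    (hew : ¬Disjoint (support e) (support w)) : support e ⊆ burstNbhd b w := by
  obtain ⟨i, hi⟩ := he.exists_support_subset
  obtain ⟨j', hj'e, hj'w⟩ := Set.not_disjoint_iff.1 hew
  exact fun j hj => ⟨i, hi hj, j', hi hj'e, hj'w⟩

lemma burstNbhd_subset_iUnion {w : ZMod n → G} {k : ℕ} {p : Fin k → ZMod n}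
    (hw : support w ⊆ ⋃ m, cycInt n (p m) b) :
    burstNbhd b w ⊆ ⋃ m, cycInt n (p m - (b - 1 : ℕ)) (3 * b - 2) := by
  rintro j ⟨i, ⟨d, hd, rfl⟩, _, ⟨c, hc, rfl⟩, hw'⟩
  obtain ⟨m, a, ha, hm⟩ := Set.mem_iUnion.1 (hw hw')
  refine Set.mem_iUnion.2 ⟨m, a + d + (b - 1 - c), by omega, ?_⟩
  push_cast [Nat.cast_sub (by omega : c ≤ b - 1)]
  linear_combination hm

open scoped Classical in
lemma burstDist_add_length_filter_le {x y : ZMod n → G} {l : List (ZMod n → G)}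
    (hl : ∀ e ∈ l, IsBurst b e) (hsum : l.sum = x - y) :
    burstDist b x y + (l.filter fun e => Disjoint (support e) (support (x - y))).length
      ≤ l.length := by
  set S := support (x - y)
  set r := Set.indicatorHom G S
  have hfar : ((l.filter fun e => Disjoint (support e) S).map r).sum = 0 :=
    List.sum_eq_zero fun _ hmem => by
      obtain ⟨e, he, rfl⟩ := List.mem_map.1 hmem
      exact Set.indicator_eq_zero'.2 (by simpa using (List.mem_filter.1 he).2)
  have hnear : SumOfBursts b (l.filter fun e => ¬Disjoint (support e) S).length (x - y) := by
    refine ⟨(l.filter fun e => ¬Disjoint (support e) S).map r, List.length_map _, ?_, ?_⟩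
    · simp only [List.mem_map]
      rintro _ ⟨e, he, rfl⟩
      exact (hl e (List.mem_filter.1 he).1).of_support_subset
        (Set.support_indicator.trans_subset Set.inter_subset_right)
    · rw [← zero_add (List.sum _), ← hfar, List.sum_map_filter_add_sum_map_filter_not,
        ← map_list_sum, hsum]
      exact Set.indicator_support
  have hdist := burstDist_le_of_sumOfBursts hnear
  simp only [decide_not] at hdist
  linarith [List.length_eq_length_filter_add (l := l) fun e => Disjoint (support e) S]

open scoped Classical in
lemma support_sum_subset_burstNbhd_union (w : ZMod n → G) {l : List (ZMod n → G)}
    (hl : ∀ e ∈ l, IsBurst b e) {s : ℕ}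
    (hs : (l.filter fun e => Disjoint (support e) (support w)).length ≤ s) :
    ∃ p : Fin s → ZMod n, support l.sum ⊆ burstNbhd b w ∪ ⋃ m, cycInt n (p m) b := by
  obtain ⟨p, hp⟩ := exists_cover_of_isBurst (fun e he => hl e (List.mem_filter.1 he).1) hs
  refine ⟨p, fun j hj => ?_⟩
  obtain ⟨e, he, hej⟩ := List.exists_mem_support_of_mem_support_sum hj
  by_cases hew : Disjoint (support e) (support w)
  · obtain ⟨m, hm⟩ := hp e (List.mem_filter.2 ⟨he, by simpa using hew⟩)
    exact Or.inr (Set.mem_iUnion.2 ⟨m, hm hej⟩)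
  · exact Or.inl ((hl e he).support_subset_burstNbhd hew hej)

lemma exists_lists_of_mem_inter_burstBall [NeZero n] (hb : 1 ≤ b) {t : ℕ} {x y z : ZMod n → G}
    (hz : z ∈ burstBall b t x ∩ burstBall b t y) :
    ∃ l₁ l₂ : List (ZMod n → G), l₁.length ≤ t ∧ l₂.length ≤ t ∧
      (∀ e ∈ l₁ ++ l₂, IsBurst b e) ∧ l₁.sum = x - z ∧ l₂.sum = z - y := by
  obtain ⟨l₁, h₁, hl₁, hs₁⟩ := exists_list_of_burstDist_le hb hz.1
  obtain ⟨l₂, h₂, hl₂, hs₂⟩ := exists_list_of_burstDist_le hb hz.2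
  refine ⟨l₁, l₂.map Neg.neg, h₁, by simpa using h₂, fun e he => ?_, hs₁, ?_⟩
  · rcases List.mem_append.1 he with he | he
    · exact hl₁ e he
    · obtain ⟨e, he₂, rfl⟩ := List.mem_map.1 he
      exact (hl₂ e he₂).neg
  · rw [← neg_sub, ← hs₂]
    exact (map_list_sum (negAddMonoidHom : (ZMod n → G) →+ _) l₂).symm

lemma ncard_burstNbhd_le_of_mem_inter [NeZero n] (hb : 1 ≤ b) {t : ℕ} {x y z : ZMod n → G}
    (hz : z ∈ burstBall b t x ∩ burstBall b t y) :
    (burstNbhd b (x - y)).ncard ≤ 2 * t * (3 * b - 2) := by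
  obtain ⟨l₁, l₂, h₁, h₂, hl, hs₁, hs₂⟩ := exists_lists_of_mem_inter_burstBall hb hz
  obtain ⟨p, hp⟩ := exists_cover_of_isBurst hl (k := 2 * t)
    (by simp only [List.length_append]; omega)
  have hw : support (x - y) ⊆ ⋃ m, cycInt n (p m) b := fun j hj => by
    rw [← sub_add_sub_cancel x z y, ← hs₁, ← hs₂, ← List.sum_append] at hj
    obtain ⟨e, he, hej⟩ := List.exists_mem_support_of_mem_support_sum hj
    obtain ⟨m, hm⟩ := hp e he
    exact Set.mem_iUnion.2 ⟨m, hm hej⟩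
  exact (Set.ncard_le_ncard (burstNbhd_subset_iUnion hw)).trans (ncard_iUnion_cycInt_le _ _)

lemma exists_support_sub_subset_of_mem_inter [NeZero n] (hb : 1 ≤ b) {s t : ℕ}
    {x y z : ZMod n → G} (hxy : 2 * (t - s - 1) + 1 ≤ burstDist b x y)
    (hz : z ∈ burstBall b t x ∩ burstBall b t y) :
    ∃ p : Fin s → ZMod n, support (x - z) ⊆ burstNbhd b (x - y) ∪ ⋃ m, cycInt n (p m) b ∨
      support (y - z) ⊆ burstNbhd b (x - y) ∪ ⋃ m, cycInt n (p m) b := by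
  classical
  obtain ⟨l₁, l₂, h₁, h₂, hl, hs₁, hs₂⟩ := exists_lists_of_mem_inter_burstBall hb hz
  have hdist := burstDist_add_length_filter_le hl
    (by rw [List.sum_append, hs₁, hs₂, sub_add_sub_cancel])
  set far := fun e : ZMod n → G => decide (Disjoint (support e) (support (x - y)))
  rw [List.filter_append, List.length_append, List.length_append] at hdist
  rcases (by omega : (l₁.filter far).length ≤ s ∨ (l₂.filter far).length ≤ s) with h | h
  · obtain ⟨p, hp⟩ := support_sum_subset_burstNbhd_union (x - y)
      (fun e he => hl e (List.mem_append_left _ he)) h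
    exact ⟨p, Or.inl (hs₁ ▸ hp)⟩
  · obtain ⟨p, hp⟩ := support_sum_subset_burstNbhd_union (x - y)
      (fun e he => hl e (List.mem_append_right _ he)) h
    refine ⟨p, Or.inr ?_⟩
    rwa [← neg_sub, support_neg, ← hs₂]

theorem ncard_inter_burstBall_le [Finite G] [NeZero n] (hb : 1 ≤ b) {s t : ℕ}
    {x y : ZMod n → G} (hxy : 2 * (t - s - 1) + 1 ≤ burstDist b x y) :
    (burstBall b t x ∩ burstBall b t y).ncard
      ≤ 2 * Nat.card G ^ (2 * t * (3 * b - 2) + s * b) * n ^ s := by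
  obtain hI | ⟨z₀, hz₀⟩ := (burstBall b t x ∩ burstBall b t y).eq_empty_or_nonempty
  · simp [hI]
  set M := 2 * t * (3 * b - 2) + s * b
  set D : (Fin s → ZMod n) → Set (ZMod n) :=
    fun p => burstNbhd b (x - y) ∪ ⋃ m, cycInt n (p m) b
  have hD (a : ZMod n → G) (p : Fin s → ZMod n) :
      {z | support (a - z) ⊆ D p}.ncard ≤ Nat.card G ^ M :=
    (ncard_setOf_support_sub_subset_le a (Set.toFinite _)).trans <|
      Nat.pow_le_pow_right Nat.card_pos <| (Set.ncard_union_le _ _).trans <|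
        add_le_add (ncard_burstNbhd_le_of_mem_inter hb hz₀) (ncard_iUnion_cycInt_le p b)
  calc (burstBall b t x ∩ burstBall b t y).ncard
      ≤ (⋃ p, {z | support (x - z) ⊆ D p} ∪ {z | support (y - z) ⊆ D p}).ncard :=
        Set.ncard_le_ncard fun z hz =>
          Set.mem_iUnion.2 (exists_support_sub_subset_of_mem_inter hb hxy hz)
    _ ≤ ∑ p, ({z | support (x - z) ⊆ D p} ∪ {z | support (y - z) ⊆ D p}).ncard :=
        Set.ncard_iUnion_le_of_fintype _
    _ ≤ ∑ _p : Fin s → ZMod n, 2 * Nat.card G ^ M :=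
        Finset.sum_le_sum fun p _ => (Set.ncard_union_le _ _).trans (by linarith [hD x p, hD y p])
    _ = 2 * Nat.card G ^ M * n ^ s := by simp [ZMod.card]; ring

end Bursts

theorem reconstruction_degree_of_correcting_code_general {G : Type*} [AddCommGroup G] [Fintype G]
    (t b s : ℕ) (hb : 1 ≤ b)
    (hs : s + 1 ≤ t) :
    ∃ c : ℝ, 0 < c ∧ ∀ n : ℕ, 2 * b * t ≤ n → ∀ C : Set (ZMod n → G),
      (∀ u ∈ C, ∀ v ∈ C, u ≠ v → 2 * (t - s - 1) + 1 ≤ burstDist b u v) →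
      ∀ x ∈ C, ∀ y ∈ C, x ≠ y →
        ((burstBall b t x ∩ burstBall b t y).ncard : ℝ) + 1 ≤ c * (n : ℝ) ^ s := by
  refine ⟨2 * Nat.card G ^ (2 * t * (3 * b - 2) + s * b) + 1, by positivity, ?_⟩
  intro n hn C hC x hx y hy hxy
  have : NeZero n := ⟨by nlinarith⟩
  have hns : (1 : ℝ) ≤ (n : ℝ) ^ s := one_le_pow₀ (by exact_mod_cast NeZero.one_le)
  have key : ((burstBall b t x ∩ burstBall b t y).ncard : ℝ)
      ≤ 2 * Nat.card G ^ (2 * t * (3 * b - 2) + s * b) * n ^ s := by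
    exact_mod_cast ncard_inter_burstBall_le hb (hC x hx y hy hxy)
  nlinarith

/-- if C is a (t−s−1,b)-burst-correcting code (minimum burst distance at
least 2(t−s−1)+1), then pairwise intersections of radius-t burst balls have size O(n^s);
hence the reconstruction degree of C over the t-burst channel is O(n^s). -/
theorem reconstruction_degree_of_correcting_code {G : Type*} [AddCommGroup G] [Fintype G]
    (q t b s : ℕ) (hq : Fintype.card G = q) (hq2 : 2 ≤ q) (hb : 1 ≤ b)
    (hs : s + 1 ≤ t) :
    ∃ c : ℝ, 0 < c ∧ ∀ n : ℕ, 2 * b * t ≤ n → ∀ C : Set (ZMod n → G),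
      (∀ u ∈ C, ∀ v ∈ C, u ≠ v → 2 * (t - s - 1) + 1 ≤ burstDist b u v) →
      ∀ x ∈ C, ∀ y ∈ C, x ≠ y →
        ((burstBall b t x ∩ burstBall b t y).ncard : ℝ) + 1 ≤ c * (n : ℝ) ^ s :=
  reconstruction_degree_of_correcting_code_general t b s hb hs
end

section
/- For fixed w ≥ r ≥ 1 and b ≥ 1, there exists a sequence of codes C_n ⊆ Σ_q^n, each contained in the burst ball Ball_{w,b}(0) and with minimum cyclic burst distance at least 2r+1, such that |C_n| = Ω(n^{w−r}). -/
open scoped BigOperators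

/-! Reed–Solomon construction. For a prime `p` comparable to `n`, place the `w * p` cells of the
grid `Fin w × 𝔽_p` at multiples of `b` in `ZMod n`, so that no `b≤`-burst covers two cells. A
polynomial `f` over `𝔽_p` of degree `< w - r` gives the codeword `g • 1_{graph f}`, of burst weight
`w`. Two distinct such polynomials agree at most `w - r - 1` times, so the supports of their
codewords share at most `w - r - 1` cells; since each burst meets at most one cell of the symmetric
difference of the supports, the burst distance is at least `2w - 2(w - r - 1) = 2r + 2`. There are
`p ^ (w - r) = Ω(n ^ (w - r))` codewords. -/

open Finset Polynomial

section Bursts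

variable {G : Type*} [AddCommGroup G] {n b : ℕ}

def BurstSeparated (b : ℕ) (S : Set (ZMod n)) : Prop :=
  ∀ i L, L ≤ b → (S ∩ cycInt n i L).Subsingleton

lemma BurstSeparated.mono {S T : Set (ZMod n)} (hT : BurstSeparated b T) (hST : S ⊆ T) :
    BurstSeparated b S :=
  fun i L hL => (hT i L hL).anti (Set.inter_subset_inter_left _ hST)

lemma burstDist_self (x : ZMod n → G) : burstDist b x x = 0 :=
  Nat.sInf_eq_zero.2 <| Or.inl ⟨[], rfl, by simp, by simp⟩

lemma sumOfBursts_card_of_support (hb : 1 ≤ b) {v : ZMod n → G} {S : Finset (ZMod n)}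
    (hS : ∀ j, v j ≠ 0 → j ∈ S) : SumOfBursts b #S v := by
  refine ⟨S.toList.map fun j => Pi.single j (v j), by simp, ?_, ?_⟩
  · simp only [List.mem_map, Finset.mem_toList]
    rintro _ ⟨j, -, rfl⟩
    refine ⟨j, 1, hb, fun j' hj' => ⟨0, one_pos, ?_⟩⟩
    by_contra h
    simp_all [Pi.single_apply]
  · ext t
    rw [Finset.sum_map_toList, Finset.sum_apply, Finset.sum_pi_single]
    split_ifs with ht
    · rfl
    · exact (not_not.1 (mt (hS t) ht)).symm

lemma card_le_of_sumOfBursts {t : ℕ} {v : ZMod n → G} {S : Finset (ZMod n)}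
    (h : SumOfBursts b t v) (hS : ∀ j ∈ S, v j ≠ 0) (hsep : BurstSeparated b (S : Set (ZMod n))) :
    #S ≤ t := by
  classical
  obtain ⟨l, rfl, hburst, rfl⟩ := h
  have hcover : ∀ j ∈ S, ∃ e ∈ l, e j ≠ 0 := fun j hj => by
    obtain ⟨_, hmap, hej⟩ :=
      List.exists_mem_ne_zero_of_sum_ne_zero (Pi.list_sum_apply j l ▸ hS j hj)
    obtain ⟨e, he, rfl⟩ := List.mem_map.1 hmap
    exact ⟨e, he, hej⟩
  choose! φ hφl hφ using hcover
  have hinj : Set.InjOn φ S := fun j hj j' hj' hjj' => by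
    obtain ⟨i, L, hL, hsupp⟩ := hburst _ (hφl j hj)
    exact hsep i L hL ⟨hj, hsupp j (hφ j hj)⟩ ⟨hj', hsupp j' (hjj' ▸ hφ j' hj')⟩
  calc #S ≤ #l.toFinset := card_le_card_of_injOn φ (fun j hj => List.mem_toFinset.2 (hφl j hj)) hinj
    _ ≤ l.length := List.toFinset_card_le l

lemma burstDist_zero_indicator_le (hb : 1 ≤ b) (g : G) (I : Finset (ZMod n)) :
    burstDist b 0 ((I : Set (ZMod n)).indicator fun _ => g) ≤ #I :=
  Nat.sInf_le <| sumOfBursts_card_of_support hb fun j hj => by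
    by_contra hjI
    simp [hjI] at hj

lemma card_symmDiff_le_burstDist_indicator (hb : 1 ≤ b) {g : G} (hg : g ≠ 0)
    {I J : Finset (ZMod n)} (hsep : BurstSeparated b ((I ∪ J : Finset (ZMod n)) : Set (ZMod n))) :
    #(symmDiff I J) ≤ burstDist b ((I : Set (ZMod n)).indicator fun _ => g)
      ((J : Set (ZMod n)).indicator fun _ => g) := by
  have hsupp : ∀ j, ((I : Set (ZMod n)).indicator (fun _ => g) -
      (J : Set (ZMod n)).indicator (fun _ => g)) j ≠ 0 ↔ j ∈ symmDiff I J := by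
    intro j
    by_cases hI : j ∈ I <;> by_cases hJ : j ∈ J <;> simp [hI, hJ, hg, Finset.mem_symmDiff]
  refine le_csInf ⟨_, sumOfBursts_card_of_support hb fun j hj => (hsupp j).1 hj⟩ fun t ht => ?_
  exact card_le_of_sumOfBursts ht (fun j hj => (hsupp j).2 hj)
    (hsep.mono (Finset.coe_subset.2 symmDiff_le_sup))

lemma eq_of_natCast_mul_add_eq {K m m' k k' : ℕ} (hK : b * K ≤ n) (hm : m < K) (hm' : m' < K)
    (hk : k < b) (hk' : k' < b)
    (h : ((b * m + k : ℕ) : ZMod n) = ((b * m' + k' : ℕ) : ZMod n)) : m = m' := by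
  have hlt : ∀ {m k}, m < K → k < b → b * m + k < n := fun hm hk => by nlinarith
  rw [ZMod.natCast_eq_natCast_iff', Nat.mod_eq_of_lt (hlt hm hk),
    Nat.mod_eq_of_lt (hlt hm' hk')] at h
  have hb : 0 < b := by omega
  simpa [Nat.mul_add_div hb, Nat.div_eq_of_lt hk, Nat.div_eq_of_lt hk'] using congrArg (· / b) h

lemma burstSeparated_range_natCast_mul {K : ℕ} (hK : b * K ≤ n) :
    BurstSeparated b (Set.range fun m : Fin K => ((b * m : ℕ) : ZMod n)) := by
  rintro i L hL _ ⟨⟨m, rfl⟩, k, hk, hmk⟩ _ ⟨⟨m', rfl⟩, k', hk', hmk'⟩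
  have hcast : ((b * m + k' : ℕ) : ZMod n) = ((b * m' + k : ℕ) : ZMod n) := by
    push_cast at hmk hmk' ⊢
    rw [hmk, hmk']
    ring
  obtain rfl : m = m' := Fin.ext <| eq_of_natCast_mul_add_eq hK m.2 m'.2 (by omega) (by omega) hcast
  rfl

lemma exists_embedding_burstSeparated (α : Type*) [Fintype α] (hb : 1 ≤ b)
    (h : b * Fintype.card α ≤ n) : ∃ e : α ↪ ZMod n, BurstSeparated b (Set.range e) := by
  have hinj : Function.Injective fun m : Fin (Fintype.card α) => ((b * m : ℕ) : ZMod n) :=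
    fun m m' hmm' => Fin.ext <| eq_of_natCast_mul_add_eq (k := 0) (k' := 0) h m.2 m'.2
      (by omega) (by omega) (by simpa using hmm')
  refine ⟨(Fintype.equivFin α).toEmbedding.trans ⟨_, hinj⟩,
    (burstSeparated_range_natCast_mul h).mono ?_⟩
  rintro _ ⟨a, rfl⟩
  exact ⟨_, rfl⟩

end Bursts

lemma Finset.card_symmDiff_add_two_mul_card_inter {α : Type*} [DecidableEq α] (s t : Finset α) :
    #(symmDiff s t) + 2 * #(s ∩ t) = #s + #t := by
  rw [symmDiff_def, sup_eq_union, card_union_of_disjoint disjoint_sdiff_sdiff]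
  have := card_sdiff_add_card_inter s t
  have := card_sdiff_add_card_inter t s
  rw [inter_comm] at this
  omega

section EvalGraph

variable {ι F : Type*} [Fintype ι] [Field F]

def evalGraph (x : ι ↪ F) (f : F[X]) : Finset (ι × F) :=
  univ.map ⟨fun i => (i, f.eval (x i)), fun _ _ h => congrArg Prod.fst h⟩

lemma mem_evalGraph {x : ι ↪ F} {f : F[X]} {a : ι × F} :
    a ∈ evalGraph x f ↔ a.2 = f.eval (x a.1) := by
  constructor
  · simp only [evalGraph, mem_map, mem_univ, true_and]
    rintro ⟨i, rfl⟩
    rfl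
  · intro h
    exact mem_map.2 ⟨a.1, mem_univ _, Prod.ext rfl h.symm⟩

lemma card_evalGraph (x : ι ↪ F) (f : F[X]) : #(evalGraph x f) = Fintype.card ι := by
  simp [evalGraph]

lemma card_evalGraph_inter_lt [DecidableEq ι] [DecidableEq F] (x : ι ↪ F) {k : ℕ} {f f' : F[X]}
    (hf : f ∈ degreeLT F k) (hf' : f' ∈ degreeLT F k) (hne : f ≠ f') :
    #(evalGraph x f ∩ evalGraph x f') < k := by
  set A := univ.filter fun i => f.eval (x i) = f'.eval (x i)
  have hle : #(evalGraph x f ∩ evalGraph x f') ≤ #A := by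
    refine card_le_card_of_injOn Prod.fst (fun a ha => ?_) fun a ha a' ha' h => ?_
    · simp only [coe_inter, Set.mem_inter_iff, mem_coe, mem_evalGraph] at ha
      simp [A, ← ha.1, ← ha.2]
    · simp only [coe_inter, Set.mem_inter_iff, mem_coe, mem_evalGraph] at ha ha'
      exact Prod.ext h (by rw [ha.1, ha'.1, h])
  have hA : #A < k := by
    by_contra! hk
    rw [mem_degreeLT] at hf hf'
    have hkA : (k : WithBot ℕ) ≤ #(A.map x) := by simpa using hk
    refine hne (eq_of_degrees_lt_of_eval_finset_eq _ (hf.trans_le hkA) (hf'.trans_le hkA) ?_)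
    simp [A]
  omega

end EvalGraph

section GraphCode

variable {G ι F : Type*} [AddCommGroup G] [Fintype ι] [Field F] {n b : ℕ}

noncomputable def graphCode (e : ι × F ↪ ZMod n) (x : ι ↪ F) (g : G) (f : F[X]) : ZMod n → G :=
  (((evalGraph x f).map e : Finset (ZMod n)) : Set (ZMod n)).indicator fun _ => g

lemma graphCode_mem_burstBall (hb : 1 ≤ b) (e : ι × F ↪ ZMod n) (x : ι ↪ F) (g : G) (f : F[X]) :
    graphCode e x g f ∈ burstBall b (Fintype.card ι) 0 := by
  have := burstDist_zero_indicator_le hb g ((evalGraph x f).map e)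
  rwa [card_map, card_evalGraph] at this

lemma two_mul_card_le_burstDist_graphCode [DecidableEq ι] [DecidableEq F] (hb : 1 ≤ b) {g : G}
    (hg : g ≠ 0) {e : ι × F ↪ ZMod n} (he : BurstSeparated b (Set.range e)) (x : ι ↪ F)
    (f f' : F[X]) :
    2 * Fintype.card ι ≤ burstDist b (graphCode e x g f) (graphCode e x g f') +
      2 * #(evalGraph x f ∩ evalGraph x f') := by
  have hsep : BurstSeparated b
      (((evalGraph x f).map e ∪ (evalGraph x f').map e : Finset (ZMod n)) : Set (ZMod n)) :=
    he.mono fun j hj => by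
      simp only [coe_union, coe_map, Set.mem_union, Set.mem_image] at hj
      rcases hj with ⟨a, -, rfl⟩ | ⟨a, -, rfl⟩ <;> exact ⟨a, rfl⟩
  have hdist := card_symmDiff_le_burstDist_indicator hb hg hsep
  have hcard :=
    card_symmDiff_add_two_mul_card_inter ((evalGraph x f).map e) ((evalGraph x f').map e)
  simp only [← map_inter, card_map, card_evalGraph] at hcard
  unfold graphCode
  omega

theorem exists_burstCode_card_eq_pow [Fintype F] {g : G} (hg : g ≠ 0)
    (hb : 1 ≤ b) {w : ℕ} (hwF : w ≤ Fintype.card F) (hn : b * (w * Fintype.card F) ≤ n) (r : ℕ) :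
    ∃ C : Set (ZMod n → G), C ⊆ burstBall b w 0 ∧
      (∀ x ∈ C, ∀ y ∈ C, x ≠ y → 2 * r + 1 ≤ burstDist b x y) ∧
      C.ncard = Fintype.card F ^ (w - r) := by
  classical
  obtain ⟨x⟩ := Function.Embedding.nonempty_of_card_le (α := Fin w) (β := F) (by simpa using hwF)
  obtain ⟨e, he⟩ := exists_embedding_burstSeparated (Fin w × F) hb (by simpa using hn)
  let code : degreeLT F (w - r) → ZMod n → G := fun f => graphCode e x g f
  have hdist : ∀ f f', f ≠ f' → 2 * r + 1 ≤ burstDist b (code f) (code f') := fun f f' hne => by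
    have h₁ := two_mul_card_le_burstDist_graphCode hb hg he x f f'
    have h₂ := card_evalGraph_inter_lt x f.2 f'.2 (Subtype.coe_injective.ne hne)
    rw [Fintype.card_fin] at h₁
    change 2 * r + 1 ≤ burstDist b (graphCode e x g f) (graphCode e x g f')
    omega
  have hinj : Function.Injective code := fun f f' h => by
    by_contra hne
    have := hdist f f' hne
    rw [h, burstDist_self] at this
    omega
  refine ⟨Set.range code, ?_, ?_, ?_⟩
  · rintro _ ⟨f, rfl⟩
    simpa using graphCode_mem_burstBall hb e x g f
  · rintro _ ⟨f, rfl⟩ _ ⟨f', rfl⟩ hne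
    exact hdist f f' fun h => hne (h ▸ rfl)
  · rw [Set.ncard_range_of_injective hinj, Nat.card_congr (degreeLTEquiv F (w - r)).toEquiv]
    simp

end GraphCode

lemma exists_prime_mul_le_lt_two_mul {M w n : ℕ} (hM : 0 < M) (hn : 2 * M * (w + 1) ≤ n) :
    ∃ p, p.Prime ∧ w < p ∧ M * p ≤ n ∧ n < 2 * M * p := by
  have hwN : w + 1 ≤ n / (2 * M) := (Nat.le_div_iff_mul_le (by omega)).2 (by linarith)
  obtain ⟨p, hp, hNp, hpN⟩ := Nat.exists_prime_lt_and_le_two_mul (n / (2 * M)) (by omega)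
  have hdiv := Nat.div_add_mod n (2 * M)
  have hmod := Nat.mod_lt n (show 2 * M > 0 by omega)
  generalize n / (2 * M) = N at *
  have hpM : M * p ≤ M * (2 * N) := Nat.mul_le_mul_left M hpN
  have hNpM : 2 * M * (N + 1) ≤ 2 * M * p := Nat.mul_le_mul_left _ hNp
  refine ⟨p, hp, by omega, ?_, ?_⟩ <;> linarith [Nat.zero_le (n % (2 * M))]

theorem johnson_lower_bound_bursts_general {G : Type*} [AddCommGroup G] [Fintype G]
    (q w r b : ℕ) (hq : Fintype.card G = q) (hq2 : 2 ≤ q) (hb : 1 ≤ b) :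
    ∃ c : ℝ, 0 < c ∧ ∃ n₀ : ℕ, ∀ n ≥ n₀, ∃ C : Set (ZMod n → G),
      C ⊆ burstBall b w (0 : ZMod n → G) ∧
      (∀ x ∈ C, ∀ y ∈ C, x ≠ y → 2 * r + 1 ≤ burstDist b x y) ∧
      c * (n : ℝ) ^ (w - r) ≤ (C.ncard : ℝ) := by
  obtain ⟨g, hg⟩ := Fintype.exists_ne_of_one_lt_card (by omega) (0 : G)
  have hM : 0 < b * (w + 1) := by positivity
  refine ⟨1 / (2 * (b * (w + 1)) : ℝ) ^ (w - r), by positivity, 2 * (b * (w + 1)) * (w + 1),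
    fun n hn => ?_⟩
  obtain ⟨p, hp, hwp, hpn, hnp⟩ := exists_prime_mul_le_lt_two_mul hM hn
  have := Fact.mk hp
  obtain ⟨C, hball, hdist, hcard⟩ := exists_burstCode_card_eq_pow (F := ZMod p) (n := n) (w := w)
    hg hb (by rw [ZMod.card]; omega) (by rw [ZMod.card]; nlinarith) r
  refine ⟨C, hball, hdist, ?_⟩
  have hnp' : (n : ℝ) / (2 * (b * (w + 1))) ≤ p := by
    rw [div_le_iff₀ (by positivity)]
    exact_mod_cast (by linarith : n ≤ p * (2 * (b * (w + 1))))
  rw [hcard, ZMod.card, Nat.cast_pow, one_div_mul_eq_div, ← div_pow]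
  exact pow_le_pow_left₀ (by positivity) hnp' _

/-- Johnson-type lower bound: for fixed w ≥ r ≥ 1, b ≥ 1, there exist codes
C_n ⊆ Ball_{w,b}(0) with minimum cyclic burst distance at least 2r+1 and
|C_n| = Ω(n^{w−r}). -/
theorem johnson_lower_bound_bursts {G : Type*} [AddCommGroup G] [Fintype G]
    (q w r b : ℕ) (hq : Fintype.card G = q) (hq2 : 2 ≤ q) (hb : 1 ≤ b)
    (hr : 1 ≤ r) (hw : r ≤ w) :
    ∃ c : ℝ, 0 < c ∧ ∃ n₀ : ℕ, ∀ n ≥ n₀, ∃ C : Set (ZMod n → G),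
      C ⊆ burstBall b w (0 : ZMod n → G) ∧
      (∀ x ∈ C, ∀ y ∈ C, x ≠ y → 2 * r + 1 ≤ burstDist b x y) ∧
      c * (n : ℝ) ^ (w - r) ≤ (C.ncard : ℝ) :=
  johnson_lower_bound_bursts_general q w r b hq hq2 hb
end
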